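/- arXiv:1004.1214 — 5 statements merged into one kernel-verified Lean document; each statement's English description precedes it below -/
import Mathlib

section
/- Let A be a finite-dimensional algebra over a field k, ρ ∈ A ⊗ A, and t_d, t_u commuting linear automorphisms of A. Then (A, ρ, t_d, t_u) is an oriented quantum algebra over k if and only if (A*, b_ρ, t_d*, t_u*) is a strict oriented quantum coalgebra over k, where b_ρ(f, g) = (f ⊗ g)(ρ). -/
open TensorProduct

noncomputable section

variable {k : Type*} [Field k]

section CoalgebraDefs

variable {C : Type*} [AddCommGroup C] [Module k C]
variable {D : Type*} [AddCommGroup D] [Module k D]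

/-- `b'` is a (two-sided convolution) inverse for the bilinear form `b`. -/
def IsInverseForm (ΔC : C →ₗ[k] C ⊗[k] C) (εC : C →ₗ[k] k)
    (ΔD : D →ₗ[k] D ⊗[k] D) (εD : D →ₗ[k] k)
    (b b' : C →ₗ[k] D →ₗ[k] k) : Prop :=
  ∀ (c : C) (d : D) (n m : ℕ) (c1 c2 : Fin n → C) (d1 d2 : Fin m → D),
    ΔC c = ∑ i, c1 i ⊗ₜ[k] c2 i →
    ΔD d = ∑ j, d1 j ⊗ₜ[k] d2 j →
    (∑ i, ∑ j, b' (c1 i) (d1 j) * b (c2 i) (d2 j) = εC c * εD d) ∧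
    (∑ i, ∑ j, b (c1 i) (d1 j) * b' (c2 i) (d2 j) = εC c * εD d)

/-- `T` is a coalgebra automorphism of `C` with respect to the set `𝒮` of bilinear forms. -/
def IsCoalgAutoWrt (Δ : C →ₗ[k] C ⊗[k] C) (εm : C →ₗ[k] k)
    (𝒮 : Set (C →ₗ[k] C →ₗ[k] k)) (T : C →ₗ[k] C) : Prop :=
  Function.Bijective T ∧ (∀ c, εm (T c) = εm c) ∧
  ∀ β ∈ 𝒮, ∀ β' ∈ 𝒮, ∀ (c d e : C) (n m : ℕ)
    (c1 c2 : Fin n → C) (f1 f2 : Fin m → C),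
    Δ c = ∑ i, c1 i ⊗ₜ[k] c2 i →
    Δ (T c) = ∑ j, f1 j ⊗ₜ[k] f2 j →
    (∑ i, β (T (c1 i)) d * β' (T (c2 i)) e = ∑ j, β (f1 j) d * β' (f2 j) e) ∧
    (∑ i, β d (T (c1 i)) * β' e (T (c2 i)) = ∑ j, β d (f1 j) * β' e (f2 j))

/-- `T` is an ordinary coalgebra automorphism. -/
def IsCoalgAuto (Δ : C →ₗ[k] C ⊗[k] C) (εm : C →ₗ[k] k) (T : C →ₗ[k] C) : Prop :=
  Function.Bijective T ∧ (∀ c, εm (T c) = εm c) ∧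
  Δ ∘ₗ T = (TensorProduct.map T T) ∘ₗ Δ

/-- Axiom (qc.1). -/
def QC1 (Δ : C →ₗ[k] C ⊗[k] C) (εm : C →ₗ[k] k)
    (b binv : C →ₗ[k] C →ₗ[k] k) (Td Tu : C →ₗ[k] C) : Prop :=
  ∀ (c d : C) (n m : ℕ) (c1 c2 : Fin n → C) (d1 d2 : Fin m → C),
    Δ c = ∑ i, c1 i ⊗ₜ[k] c2 i →
    Δ d = ∑ j, d1 j ⊗ₜ[k] d2 j →
    (∑ i, ∑ j, b (c1 i) (Tu (d2 j)) * binv (Td (c2 i)) (d1 j) = εm c * εm d) ∧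
    (∑ i, ∑ j, binv (Td (c1 i)) (d2 j) * b (c2 i) (Tu (d1 j)) = εm c * εm d)

/-- Axiom (qc.2). -/
def QC2 (b : C →ₗ[k] C →ₗ[k] k) (Td Tu : C →ₗ[k] C) : Prop :=
  ∀ c d : C, b (Td c) (Td d) = b c d ∧ b (Tu c) (Tu d) = b c d

/-- Axiom (qc.3), the quantum coalgebra Yang–Baxter relation. -/
def QC3 (Δ : C →ₗ[k] C ⊗[k] C) (b : C →ₗ[k] C →ₗ[k] k) : Prop :=
  ∀ (c d e : C) (n m p : ℕ) (c1 c2 : Fin n → C) (d1 d2 : Fin m → C) (e1 e2 : Fin p → C),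
    Δ c = ∑ i, c1 i ⊗ₜ[k] c2 i →
    Δ d = ∑ j, d1 j ⊗ₜ[k] d2 j →
    Δ e = ∑ l, e1 l ⊗ₜ[k] e2 l →
    ∑ i, ∑ j, ∑ l, b (c1 i) (d1 j) * b (c2 i) (e1 l) * b (d2 j) (e2 l)
      = ∑ i, ∑ j, ∑ l, b (c2 i) (d2 j) * b (c1 i) (e2 l) * b (d1 j) (e1 l)

/-- Oriented quantum coalgebra, with comultiplication `Δ`, counit `εm`, bilinear form `b`
with inverse `binv`, and structure maps `Td`, `Tu`. -/
def IsOrientedQuantumCoalgebra (Δ : C →ₗ[k] C ⊗[k] C) (εm : C →ₗ[k] k)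
    (b binv : C →ₗ[k] C →ₗ[k] k) (Td Tu : C →ₗ[k] C) : Prop :=
  IsInverseForm Δ εm Δ εm b binv ∧
  IsCoalgAutoWrt Δ εm {b, binv} Td ∧
  IsCoalgAutoWrt Δ εm {b, binv} Tu ∧
  Td ∘ₗ Tu = Tu ∘ₗ Td ∧
  QC1 Δ εm b binv Td Tu ∧ QC2 b Td Tu ∧ QC3 Δ b

/-- Strict oriented quantum coalgebra. -/
def IsStrictOrientedQuantumCoalgebra (Δ : C →ₗ[k] C ⊗[k] C) (εm : C →ₗ[k] k)
    (b binv : C →ₗ[k] C →ₗ[k] k) (Td Tu : C →ₗ[k] C) : Prop :=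
  IsInverseForm Δ εm Δ εm b binv ∧
  IsCoalgAuto Δ εm Td ∧ IsCoalgAuto Δ εm Tu ∧
  Td ∘ₗ Tu = Tu ∘ₗ Td ∧
  QC1 Δ εm b binv Td Tu ∧ QC2 b Td Tu ∧ QC3 Δ b

/-- Quantum coalgebra `(C, b, S)`: `S : C → C^cop` is a coalgebra isomorphism with
respect to `b`, `b` is invertible with inverse `b(S(·),·)` (axiom (QC.1)), and
(QC.2), (QC.3) hold. -/
def IsQuantumCoalgebra (Δ : C →ₗ[k] C ⊗[k] C) (εm : C →ₗ[k] k)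
    (b : C →ₗ[k] C →ₗ[k] k) (S : C →ₗ[k] C) : Prop :=
  Function.Bijective S ∧ (∀ c, εm (S c) = εm c) ∧
  (∀ (c d e : C) (n m : ℕ) (c1 c2 : Fin n → C) (f1 f2 : Fin m → C),
    Δ c = ∑ i, c1 i ⊗ₜ[k] c2 i →
    Δ (S c) = ∑ j, f1 j ⊗ₜ[k] f2 j →
    (∑ i, b (S (c1 i)) d * b (S (c2 i)) e = ∑ j, b (f2 j) d * b (f1 j) e) ∧
    (∑ i, b d (S (c1 i)) * b e (S (c2 i)) = ∑ j, b d (f2 j) * b e (f1 j))) ∧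
  IsInverseForm Δ εm Δ εm b (b ∘ₗ S) ∧
  (∀ c d, b (S c) (S d) = b c d) ∧
  QC3 Δ b

/-- Strict quantum coalgebra `(C, b, S)`: `S : C → C^cop` is an ordinary coalgebra
isomorphism and (QC.1)–(QC.3) hold. -/
def IsStrictQuantumCoalgebra (Δ : C →ₗ[k] C ⊗[k] C) (εm : C →ₗ[k] k)
    (b : C →ₗ[k] C →ₗ[k] k) (S : C →ₗ[k] C) : Prop :=
  Function.Bijective S ∧ (∀ c, εm (S c) = εm c) ∧
  (∀ c, (TensorProduct.comm k C C) (Δ (S c)) = TensorProduct.map S S (Δ c)) ∧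
  IsInverseForm Δ εm Δ εm b (b ∘ₗ S) ∧
  (∀ c d, b (S c) (S d) = b c d) ∧
  QC3 Δ b

end CoalgebraDefs

section AlgebraDefs

variable {A : Type*} [Ring A] [Algebra k A]

def rho12 (ρ : A ⊗[k] A) : (A ⊗[k] A) ⊗[k] A := ρ ⊗ₜ[k] (1 : A)

def rho13 (ρ : A ⊗[k] A) : (A ⊗[k] A) ⊗[k] A :=
  TensorProduct.map ((TensorProduct.mk k A A).flip 1) LinearMap.id ρ

def rho23 (ρ : A ⊗[k] A) : (A ⊗[k] A) ⊗[k] A :=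
  TensorProduct.map (TensorProduct.mk k A A 1) LinearMap.id ρ

/-- The quantum Yang–Baxter equation for `ρ ∈ A ⊗ A`. -/
def QYBE (ρ : A ⊗[k] A) : Prop :=
  rho12 ρ * rho13 ρ * rho23 ρ = rho23 ρ * rho13 ρ * rho12 ρ

/-- Quantum algebra `(A, ρ, s)`. -/
def IsQuantumAlgebra (ρ : A ⊗[k] A) (s : A →ₗ[k] A) : Prop :=
  Function.Bijective s ∧ s 1 = 1 ∧ (∀ a b : A, s (a * b) = s b * s a) ∧
  ρ * TensorProduct.map s LinearMap.id ρ = 1 ∧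
  TensorProduct.map s LinearMap.id ρ * ρ = 1 ∧
  TensorProduct.map s s ρ = ρ ∧
  QYBE ρ

def opL (k A : Type*) [Field k] [Ring A] [Algebra k A] : A →ₗ[k] Aᵐᵒᵖ :=
  (MulOpposite.opLinearEquiv k).toLinearMap

/-- Oriented quantum algebra `(A, ρ, t_d, t_u)`. -/
def IsOrientedQuantumAlgebra (ρ : A ⊗[k] A) (td tu : A →ₗ[k] A) : Prop :=
  Function.Bijective td ∧ td 1 = 1 ∧ (∀ a b : A, td (a * b) = td a * td b) ∧
  Function.Bijective tu ∧ tu 1 = 1 ∧ (∀ a b : A, tu (a * b) = tu a * tu b) ∧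
  td ∘ₗ tu = tu ∘ₗ td ∧
  ∃ ρinv : A ⊗[k] A, ρ * ρinv = 1 ∧ ρinv * ρ = 1 ∧
    TensorProduct.map td (opL k A) ρinv * TensorProduct.map LinearMap.id (opL k A ∘ₗ tu) ρ = 1 ∧
    TensorProduct.map LinearMap.id (opL k A ∘ₗ tu) ρ * TensorProduct.map td (opL k A) ρinv = 1 ∧
    TensorProduct.map td td ρ = ρ ∧ TensorProduct.map tu tu ρ = ρ ∧
    QYBE ρ

/-- The comultiplication of the dual coalgebra of a finite-dimensional algebra. -/
def dualComul (k A : Type*) [Field k] [Ring A] [Algebra k A] [FiniteDimensional k A] :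
    Module.Dual k A →ₗ[k] Module.Dual k A ⊗[k] Module.Dual k A :=
  (TensorProduct.dualDistribEquiv k A A).symm.toLinearMap ∘ₗ (LinearMap.mul' k A).dualMap

/-- The counit of the dual coalgebra: evaluation at `1`. -/
def dualCounit (k A : Type*) [Field k] [Ring A] [Algebra k A] : Module.Dual k A →ₗ[k] k :=
  Module.Dual.eval k A 1

/-- The bilinear form `b_ρ` on the dual: `b_ρ(f, g) = (f ⊗ g)(ρ)`. -/
def dualForm {A : Type*} [Ring A] [Algebra k A] (ρ : A ⊗[k] A) :
    Module.Dual k A →ₗ[k] Module.Dual k A →ₗ[k] k :=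
  TensorProduct.curry ((Module.Dual.eval k (A ⊗[k] A) ρ) ∘ₗ TensorProduct.dualDistrib k A A)

/-- The embedding `A → A ⊕ A^op` onto the first summand. -/
def inlA (k A : Type*) [Field k] [Ring A] [Algebra k A] : A →ₗ[k] A × Aᵐᵒᵖ :=
  LinearMap.inl k A Aᵐᵒᵖ

/-- The embedding `a ↦ ā` of `A` onto the second summand `A^op` of `A ⊕ A^op`. -/
def inrA (k A : Type*) [Field k] [Ring A] [Algebra k A] : A →ₗ[k] A × Aᵐᵒᵖ :=
  LinearMap.inr k A Aᵐᵒᵖ ∘ₗ opL k A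

/-- The element `𝝆` of the doubling construction. -/
def doubleRho (ρ ρinv : A ⊗[k] A) (td' tu' : A →ₗ[k] A) :
    (A × Aᵐᵒᵖ) ⊗[k] (A × Aᵐᵒᵖ) :=
  TensorProduct.map (inlA k A) (inlA k A) ρ + TensorProduct.map (inrA k A) (inrA k A) ρ
    + TensorProduct.map (inrA k A) (inlA k A) ρinv
    + TensorProduct.map (inlA k A) (inrA k A ∘ₗ td' ∘ₗ tu') ρinv

/-- The map `𝐬(a ⊕ b) = b ⊕ t_d⁻¹∘t_u⁻¹(a)` of the doubling construction,
where `td'`, `tu'` are the inverses of `t_d`, `t_u`. -/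
def doubleS {A : Type*} [Ring A] [Algebra k A] (td' tu' : A →ₗ[k] A) :
    A × Aᵐᵒᵖ →ₗ[k] A × Aᵐᵒᵖ :=
  LinearMap.prod ((MulOpposite.opLinearEquiv k).symm.toLinearMap ∘ₗ LinearMap.snd k A Aᵐᵒᵖ)
    ((MulOpposite.opLinearEquiv k).toLinearMap ∘ₗ td' ∘ₗ tu' ∘ₗ LinearMap.fst k A Aᵐᵒᵖ)

/-- The diagonal extension `t ⊕ t` of an automorphism `t` of `A` to `A ⊕ A^op`. -/
def doubleT {A : Type*} [Ring A] [Algebra k A] (t : A →ₗ[k] A) :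
    A × Aᵐᵒᵖ →ₗ[k] A × Aᵐᵒᵖ :=
  LinearMap.prodMap t ((MulOpposite.opLinearEquiv k).toLinearMap ∘ₗ t ∘ₗ
    (MulOpposite.opLinearEquiv k).symm.toLinearMap)

end AlgebraDefs

end

/-!
For finite-dimensional `A`, `ρ ↦ b_ρ` is a linear isomorphism from `A ⊗ A` onto the bilinear
forms on `A*`, and the functionals `F ⊗ G` (resp. `F ⊗ G ⊗ H`) separate the points of `A ⊗ A`
(resp. `A ⊗ A ⊗ A`). Pairing with `F ⊗ G` turns products in `A ⊗ A` (resp. `A ⊗ Aᵐᵒᵖ`) into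
the convolutions of the Sweedler components of `ΔF` and `ΔG` that appear in the axioms, so every
axiom of `(A*, b_ρ, b_σ, t_d*, t_u*)` is the corresponding identity for `(A, ρ, σ, t_d, t_u)`
paired against all pure functionals, and is therefore equivalent to it. The inverse form `b_σ`
exists because `ρ ↦ b_ρ` is onto.
-/

open TensorProduct

section SumTmul

variable {R C : Type*} [CommSemiring R] [AddCommMonoid C] [Module R C]

theorem forall_sum_tmul_eq_imp_iff₂ (x y : C ⊗[R] C) (p : Prop) :
    (∀ (n m : ℕ) (x1 x2 : Fin n → C) (y1 y2 : Fin m → C),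
      x = ∑ i, x1 i ⊗ₜ[R] x2 i → y = ∑ j, y1 j ⊗ₜ[R] y2 j → p) ↔ p := by
  obtain ⟨n, x1, x2, hx⟩ := exists_sum_tmul_eq x
  obtain ⟨m, y1, y2, hy⟩ := exists_sum_tmul_eq y
  exact ⟨fun h => h n m x1 x2 y1 y2 hx hy, fun hp _ _ _ _ _ _ _ _ => hp⟩

theorem forall_sum_tmul_eq_imp_iff₃ (x y z : C ⊗[R] C) (p : Prop) :
    (∀ (n m q : ℕ) (x1 x2 : Fin n → C) (y1 y2 : Fin m → C) (z1 z2 : Fin q → C),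
      x = ∑ i, x1 i ⊗ₜ[R] x2 i → y = ∑ j, y1 j ⊗ₜ[R] y2 j → z = ∑ l, z1 l ⊗ₜ[R] z2 l → p) ↔
      p := by
  obtain ⟨n, x1, x2, hx⟩ := exists_sum_tmul_eq x
  obtain ⟨m, y1, y2, hy⟩ := exists_sum_tmul_eq y
  obtain ⟨q, z1, z2, hz⟩ := exists_sum_tmul_eq z
  exact ⟨fun h => h n m q x1 x2 y1 y2 z1 z2 hx hy hz, fun hp _ _ _ _ _ _ _ _ _ _ _ _ => hp⟩

end SumTmul

section DualDistrib

variable {k M N : Type*} [Field k] [AddCommGroup M] [Module k M] [AddCommGroup N] [Module k N]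

theorem TensorProduct.dualDistrib_map_dualMap (t : M →ₗ[k] M) (t' : N →ₗ[k] N)
    (s : Module.Dual k M ⊗[k] Module.Dual k N) :
    dualDistrib k M N (map t.dualMap t'.dualMap s) = dualDistrib k M N s ∘ₗ map t t' := by
  induction s using TensorProduct.induction_on with
  | zero => simp
  | tmul F G => ext; simp
  | add s s' hs hs' => simp only [map_add, hs, hs', LinearMap.add_comp]

variable [FiniteDimensional k M] [FiniteDimensional k N]

theorem TensorProduct.ext_dualDistrib {x y : M ⊗[k] N}
    (h : ∀ (F : Module.Dual k M) (G : Module.Dual k N),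
      dualDistrib k M N (F ⊗ₜ G) x = dualDistrib k M N (F ⊗ₜ G) y) : x = y := by
  refine Module.eval_apply_injective k (LinearMap.ext fun φ => ?_)
  obtain ⟨s, rfl⟩ := (dualDistribEquiv k M N).surjective φ
  have hxy : Module.Dual.eval k _ x ∘ₗ dualDistrib k M N =
      Module.Dual.eval k _ y ∘ₗ dualDistrib k M N := TensorProduct.ext' h
  exact LinearMap.congr_fun hxy s

end DualDistrib

section DualQuantumCoalgebra

variable {k A : Type*} [Field k] [Ring A] [Algebra k A]

@[simp]
theorem dualForm_tmul (a b : A) (F G : Module.Dual k A) :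
    dualForm (a ⊗ₜ[k] b) F G = F a * G b := rfl

theorem dualForm_one (F G : Module.Dual k A) :
    dualForm (1 : A ⊗[k] A) F G = dualCounit k A F * dualCounit k A G := rfl

@[simp]
theorem dualForm_zero : dualForm (0 : A ⊗[k] A) = 0 := by
  ext; simp [dualForm]

@[simp]
theorem dualForm_add (x y : A ⊗[k] A) : dualForm (x + y) = dualForm x + dualForm y := by
  ext; simp [dualForm]

theorem dualForm_dualMap_left (t : A →ₗ[k] A) (x : A ⊗[k] A) (F G : Module.Dual k A) :
    dualForm x (t.dualMap F) G = dualForm (map t LinearMap.id x) F G := by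
  induction x using TensorProduct.induction_on with
  | zero => simp
  | tmul a b => simp
  | add x y hx hy => simp only [map_add, dualForm_add, LinearMap.add_apply, hx, hy]

theorem dualForm_dualMap_right (t : A →ₗ[k] A) (x : A ⊗[k] A) (F G : Module.Dual k A) :
    dualForm x F (t.dualMap G) = dualForm (map LinearMap.id t x) F G := by
  induction x using TensorProduct.induction_on with
  | zero => simp
  | tmul a b => simp
  | add x y hx hy => simp only [map_add, dualForm_add, LinearMap.add_apply, hx, hy]

variable (k A) in
def tensorOpEquiv : A ⊗[k] A ≃ₗ[k] A ⊗[k] Aᵐᵒᵖ :=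
  LinearEquiv.lTensor A (MulOpposite.opLinearEquiv k)

theorem tensorOpEquiv_map (f g : A →ₗ[k] A) (x : A ⊗[k] A) :
    tensorOpEquiv k A (map f g x) = map f (opL k A ∘ₗ g) x := by
  induction x using TensorProduct.induction_on with
  | zero => simp
  | tmul a b => simp [tensorOpEquiv, opL]
  | add x y hx hy => simp only [map_add, hx, hy]

theorem tensorOpEquiv_one : tensorOpEquiv k A 1 = 1 := by
  simp [tensorOpEquiv, Algebra.TensorProduct.one_def]

def dualTmul₃ (F G H : Module.Dual k A) : Module.Dual k ((A ⊗[k] A) ⊗[k] A) :=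
  dualDistrib k (A ⊗[k] A) A (dualDistrib k A A (F ⊗ₜ G) ⊗ₜ H)

@[simp]
theorem dualTmul₃_tmul (F G H : Module.Dual k A) (a b c : A) :
    dualTmul₃ F G H ((a ⊗ₜ b) ⊗ₜ c) = F a * G b * H c := rfl

theorem rho12_add (x y : A ⊗[k] A) : rho12 (x + y) = rho12 x + rho12 y := add_tmul x y 1

theorem rho13_add (x y : A ⊗[k] A) : rho13 (x + y) = rho13 x + rho13 y := map_add _ x y

theorem rho23_add (x y : A ⊗[k] A) : rho23 (x + y) = rho23 x + rho23 y := map_add _ x y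

variable [FiniteDimensional k A]

theorem dualForm_bijective : Function.Bijective (dualForm : A ⊗[k] A → _) :=
  ((Module.evalEquiv k (A ⊗[k] A)).trans ((dualDistribEquiv k A A).dualMap.trans
    (TensorProduct.lift.equiv (RingHom.id k) _ _ k).symm)).bijective

theorem ext_dualTmul₃ {x y : (A ⊗[k] A) ⊗[k] A}
    (h : ∀ F G H, dualTmul₃ F G H x = dualTmul₃ F G H y) : x = y := by
  refine TensorProduct.ext_dualDistrib fun Φ H => ?_
  obtain ⟨s, rfl⟩ := (dualDistribEquiv k A A).surjective Φ
  induction s using TensorProduct.induction_on with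
  | zero => simp
  | tmul F G => exact h F G H
  | add s s' hs hs' => simp only [map_add, add_tmul, LinearMap.add_apply, hs, hs']

theorem dualDistrib_dualComul (F : Module.Dual k A) :
    dualDistrib k A A (dualComul k A F) = F ∘ₗ LinearMap.mul' k A :=
  (dualDistribEquiv k A A).apply_symm_apply _

theorem dualCounit_dualMap_eq_iff (t : A →ₗ[k] A) :
    (∀ F, dualCounit k A (t.dualMap F) = dualCounit k A F) ↔ t 1 = 1 :=
  ⟨fun h => Module.eval_apply_injective k (LinearMap.ext h), fun h F => by simp [dualCounit, h]⟩

theorem dualComul_comp_dualMap_eq_iff (t : A →ₗ[k] A) :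
    dualComul k A ∘ₗ t.dualMap = map t.dualMap t.dualMap ∘ₗ dualComul k A ↔
      ∀ a b : A, t (a * b) = t a * t b := by
  constructor
  · intro h a b
    refine Module.eval_apply_injective k (LinearMap.ext fun F => ?_)
    have := LinearMap.congr_fun (congrArg (dualDistrib k A A) (LinearMap.congr_fun h F)) (a ⊗ₜ b)
    simpa [dualDistrib_dualComul, dualDistrib_map_dualMap] using this
  · intro h
    ext F : 1
    apply (dualDistribEquiv k A A).injective
    change dualDistrib k A A _ = dualDistrib k A A _
    rw [LinearMap.comp_apply, LinearMap.comp_apply, dualDistrib_dualComul,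
      dualDistrib_map_dualMap, dualDistrib_dualComul]
    exact TensorProduct.ext' fun a b => by simp [h]

theorem isCoalgAuto_dualMap_iff {t : A →ₗ[k] A} (ht : Function.Bijective t) :
    IsCoalgAuto (dualComul k A) (dualCounit k A) t.dualMap ↔
      t 1 = 1 ∧ ∀ a b : A, t (a * b) = t a * t b := by
  have hdual : Function.Bijective t.dualMap := (LinearEquiv.ofBijective t ht).dualMap.bijective
  simp only [IsCoalgAuto, hdual, dualCounit_dualMap_eq_iff, dualComul_comp_dualMap_eq_iff,
    true_and]

variable {n m q : ℕ} {F G H : Module.Dual k A} {F1 F2 : Fin n → Module.Dual k A}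
  {G1 G2 : Fin m → Module.Dual k A} {H1 H2 : Fin q → Module.Dual k A}

theorem sum_apply_mul_apply_of_dualComul_eq (hF : dualComul k A F = ∑ i, F1 i ⊗ₜ[k] F2 i)
    (a b : A) : ∑ i, F1 i a * F2 i b = F (a * b) := by
  simpa [hF] using LinearMap.congr_fun (dualDistrib_dualComul F) (a ⊗ₜ b)

theorem sum_dualForm_mul_dualForm (hF : dualComul k A F = ∑ i, F1 i ⊗ₜ[k] F2 i)
    (hG : dualComul k A G = ∑ j, G1 j ⊗ₜ[k] G2 j) (x y : A ⊗[k] A) :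
    ∑ i, ∑ j, dualForm x (F1 i) (G1 j) * dualForm y (F2 i) (G2 j) = dualForm (x * y) F G := by
  induction x using TensorProduct.induction_on with
  | zero => simp
  | add x₁ x₂ h₁ h₂ =>
    simp only [add_mul, dualForm_add, LinearMap.add_apply, Finset.sum_add_distrib, h₁, h₂]
  | tmul a b =>
    induction y using TensorProduct.induction_on with
    | zero => simp
    | add y₁ y₂ h₁ h₂ =>
      simp only [mul_add, dualForm_add, LinearMap.add_apply, Finset.sum_add_distrib, h₁, h₂]
    | tmul c d =>
      rw [Algebra.TensorProduct.tmul_mul_tmul, dualForm_tmul,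
        ← sum_apply_mul_apply_of_dualComul_eq hF, ← sum_apply_mul_apply_of_dualComul_eq hG,
        Finset.sum_mul_sum]
      simp only [dualForm_tmul]
      exact Finset.sum_congr rfl fun i _ => Finset.sum_congr rfl fun j _ => by ring

theorem sum_dualForm_mul_dualForm_op (hF : dualComul k A F = ∑ i, F1 i ⊗ₜ[k] F2 i)
    (hG : dualComul k A G = ∑ j, G1 j ⊗ₜ[k] G2 j) (x y : A ⊗[k] A) :
    ∑ i, ∑ j, dualForm x (F1 i) (G2 j) * dualForm y (F2 i) (G1 j) =
      dualForm ((tensorOpEquiv k A).symm (tensorOpEquiv k A x * tensorOpEquiv k A y)) F G := by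
  induction x using TensorProduct.induction_on with
  | zero => simp
  | add x₁ x₂ h₁ h₂ =>
    simp only [map_add, add_mul, dualForm_add, LinearMap.add_apply, Finset.sum_add_distrib, h₁, h₂]
  | tmul a b =>
    induction y using TensorProduct.induction_on with
    | zero => simp
    | add y₁ y₂ h₁ h₂ =>
      simp only [map_add, mul_add, dualForm_add, LinearMap.add_apply, Finset.sum_add_distrib, h₁,
        h₂]
    | tmul c d =>
      simp only [tensorOpEquiv, LinearEquiv.lTensor_tmul, Algebra.TensorProduct.tmul_mul_tmul,
        LinearEquiv.symm_lTensor, MulOpposite.coe_opLinearEquiv,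
        MulOpposite.coe_opLinearEquiv_symm, ← MulOpposite.op_mul, MulOpposite.unop_op,
        dualForm_tmul]
      rw [← sum_apply_mul_apply_of_dualComul_eq hF, ← sum_apply_mul_apply_of_dualComul_eq hG,
        Finset.sum_mul_sum]
      exact Finset.sum_congr rfl fun i _ => Finset.sum_congr rfl fun j _ => by ring

theorem sum_dualForm_mul_dualForm_mul_dualForm (hF : dualComul k A F = ∑ i, F1 i ⊗ₜ[k] F2 i)
    (hG : dualComul k A G = ∑ j, G1 j ⊗ₜ[k] G2 j) (hH : dualComul k A H = ∑ l, H1 l ⊗ₜ[k] H2 l)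
    (x y z : A ⊗[k] A) :
    ∑ i, ∑ j, ∑ l, dualForm x (F1 i) (G1 j) * dualForm y (F2 i) (H1 l) * dualForm z (G2 j) (H2 l) =
      dualTmul₃ F G H (rho12 x * rho13 y * rho23 z) := by
  induction x using TensorProduct.induction_on with
  | zero => simp [rho12]
  | add x₁ x₂ h₁ h₂ =>
    simp only [rho12_add, add_mul, map_add, dualForm_add, LinearMap.add_apply,
      Finset.sum_add_distrib, h₁, h₂]
  | tmul a b =>
    induction y using TensorProduct.induction_on with
    | zero => simp [rho13]
    | add y₁ y₂ h₁ h₂ =>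
      simp only [rho13_add, add_mul, mul_add, map_add, dualForm_add, LinearMap.add_apply,
        Finset.sum_add_distrib, h₁, h₂]
    | tmul c d =>
      induction z using TensorProduct.induction_on with
      | zero => simp [rho23]
      | add z₁ z₂ h₁ h₂ =>
        simp only [rho23_add, mul_add, map_add, dualForm_add, LinearMap.add_apply,
          Finset.sum_add_distrib, h₁, h₂]
      | tmul e f =>
        simp only [rho12, rho13, rho23, map_tmul, LinearMap.flip_apply, mk_apply,
          LinearMap.id_coe, id_eq, Algebra.TensorProduct.tmul_mul_tmul, mul_one, one_mul,
          dualTmul₃_tmul, dualForm_tmul]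
        rw [← sum_apply_mul_apply_of_dualComul_eq hF, ← sum_apply_mul_apply_of_dualComul_eq hG,
          ← sum_apply_mul_apply_of_dualComul_eq hH, mul_assoc, Finset.sum_mul_sum,
          Finset.sum_mul_sum]
        simp only [Finset.mul_sum]
        exact Finset.sum_congr rfl fun i _ => Finset.sum_congr rfl fun j _ =>
          Finset.sum_congr rfl fun l _ => by ring

theorem sum_dualForm_mul_dualForm_mul_dualForm_rev
    (hF : dualComul k A F = ∑ i, F1 i ⊗ₜ[k] F2 i) (hG : dualComul k A G = ∑ j, G1 j ⊗ₜ[k] G2 j)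
    (hH : dualComul k A H = ∑ l, H1 l ⊗ₜ[k] H2 l) (x y z : A ⊗[k] A) :
    ∑ i, ∑ j, ∑ l, dualForm x (F2 i) (G2 j) * dualForm y (F1 i) (H2 l) * dualForm z (G1 j) (H1 l) =
      dualTmul₃ F G H (rho23 z * rho13 y * rho12 x) := by
  induction x using TensorProduct.induction_on with
  | zero => simp [rho12]
  | add x₁ x₂ h₁ h₂ =>
    simp only [rho12_add, add_mul, mul_add, map_add, dualForm_add, LinearMap.add_apply,
      Finset.sum_add_distrib, h₁, h₂]
  | tmul a b =>
    induction y using TensorProduct.induction_on with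
    | zero => simp [rho13]
    | add y₁ y₂ h₁ h₂ =>
      simp only [rho13_add, add_mul, mul_add, map_add, dualForm_add, LinearMap.add_apply,
        Finset.sum_add_distrib, h₁, h₂]
    | tmul c d =>
      induction z using TensorProduct.induction_on with
      | zero => simp [rho23]
      | add z₁ z₂ h₁ h₂ =>
        simp only [rho23_add, add_mul, mul_add, map_add, dualForm_add, LinearMap.add_apply,
          Finset.sum_add_distrib, h₁, h₂]
      | tmul e f =>
        simp only [rho12, rho13, rho23, map_tmul, LinearMap.flip_apply, mk_apply,
          LinearMap.id_coe, id_eq, Algebra.TensorProduct.tmul_mul_tmul, mul_one, one_mul,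
          dualTmul₃_tmul, dualForm_tmul]
        rw [← sum_apply_mul_apply_of_dualComul_eq hF, ← sum_apply_mul_apply_of_dualComul_eq hG,
          ← sum_apply_mul_apply_of_dualComul_eq hH, mul_assoc, Finset.sum_mul_sum,
          Finset.sum_mul_sum]
        simp only [Finset.mul_sum]
        exact Finset.sum_congr rfl fun i _ => Finset.sum_congr rfl fun j _ =>
          Finset.sum_congr rfl fun l _ => by ring

/- Below, `simp +contextual` puts the Sweedler representations of the comultiplications into the
context, where `assumption` discharges them for the pairing lemmas; what remains no longer depends
on the representation. -/

theorem isInverseForm_dualForm_iff (ρ σ : A ⊗[k] A) :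
    IsInverseForm (dualComul k A) (dualCounit k A) (dualComul k A) (dualCounit k A)
      (dualForm ρ) (dualForm σ) ↔ σ * ρ = 1 ∧ ρ * σ = 1 := by
  simp +contextual (disch := assumption) only [IsInverseForm, sum_dualForm_mul_dualForm,
    ← dualForm_one, forall_sum_tmul_eq_imp_iff₂, forall_and, ← LinearMap.ext_iff₂,
    dualForm_bijective.1.eq_iff]

theorem qc1_dualForm_iff (ρ σ : A ⊗[k] A) (td tu : A →ₗ[k] A) :
    QC1 (dualComul k A) (dualCounit k A) (dualForm ρ) (dualForm σ) td.dualMap tu.dualMap ↔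
      map LinearMap.id (opL k A ∘ₗ tu) ρ * map td (opL k A) σ = 1 ∧
        map td (opL k A) σ * map LinearMap.id (opL k A ∘ₗ tu) ρ = 1 := by
  simp +contextual (disch := assumption) only [QC1, dualForm_dualMap_left,
    dualForm_dualMap_right, sum_dualForm_mul_dualForm_op, ← dualForm_one,
    forall_sum_tmul_eq_imp_iff₂, forall_and, ← LinearMap.ext_iff₂, dualForm_bijective.1.eq_iff,
    LinearEquiv.symm_apply_eq, tensorOpEquiv_map, LinearMap.comp_id, tensorOpEquiv_one]

theorem qc2_dualForm_iff (ρ : A ⊗[k] A) (td tu : A →ₗ[k] A) :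
    QC2 (dualForm ρ) td.dualMap tu.dualMap ↔ map td td ρ = ρ ∧ map tu tu ρ = ρ := by
  simp only [QC2, dualForm_dualMap_left, dualForm_dualMap_right, map_map, LinearMap.id_comp,
    LinearMap.comp_id, forall_and, ← LinearMap.ext_iff₂, dualForm_bijective.1.eq_iff]

theorem qc3_dualForm_iff (ρ : A ⊗[k] A) : QC3 (dualComul k A) (dualForm ρ) ↔ QYBE ρ := by
  simp +contextual (disch := assumption) only [QC3, sum_dualForm_mul_dualForm_mul_dualForm,
    sum_dualForm_mul_dualForm_mul_dualForm_rev, forall_sum_tmul_eq_imp_iff₃]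
  exact ⟨ext_dualTmul₃, fun h _ _ _ => by rw [h]⟩

end DualQuantumCoalgebra

/-- Duality: `(A, ρ, t_d, t_u)` is an oriented quantum algebra iff
`(A*, b_ρ, t_d*, t_u*)` is a strict oriented quantum coalgebra, for finite-dimensional `A`. -/
theorem oriented_quantum_algebra_iff_dual_strict_oriented_quantum_coalgebra
    {k A : Type*} [Field k] [Ring A] [Algebra k A] [FiniteDimensional k A]
    (ρ : A ⊗[k] A) (td tu : A →ₗ[k] A)
    (htd : Function.Bijective td) (htu : Function.Bijective tu)
    (hcomm : td ∘ₗ tu = tu ∘ₗ td) :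
    IsOrientedQuantumAlgebra ρ td tu ↔
      ∃ binv, IsStrictOrientedQuantumCoalgebra (dualComul k A) (dualCounit k A)
        (dualForm ρ) binv td.dualMap tu.dualMap := by
  have hcomm_dual : td.dualMap ∘ₗ tu.dualMap = tu.dualMap ∘ₗ td.dualMap := by
    rw [LinearMap.dualMap_comp_dualMap, LinearMap.dualMap_comp_dualMap, hcomm]
  rw [dualForm_bijective.2.exists]
  simp only [IsOrientedQuantumAlgebra, IsStrictOrientedQuantumCoalgebra,
    isInverseForm_dualForm_iff, isCoalgAuto_dualMap_iff htd, isCoalgAuto_dualMap_iff htu,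
    qc1_dualForm_iff, qc2_dualForm_iff, qc3_dualForm_iff, htd, htu, hcomm, hcomm_dual, true_and]
  constructor
  · rintro ⟨h1d, hmd, h1u, hmu, σ, hρσ, hσρ, hXY, hYX, hd, hu, hybe⟩
    exact ⟨σ, ⟨hσρ, hρσ⟩, ⟨h1d, hmd⟩, ⟨h1u, hmu⟩, ⟨hYX, hXY⟩, ⟨hd, hu⟩, hybe⟩
  · rintro ⟨σ, ⟨hσρ, hρσ⟩, ⟨h1d, hmd⟩, ⟨h1u, hmu⟩, ⟨hYX, hXY⟩, ⟨hd, hu⟩, hybe⟩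
    exact ⟨h1d, hmd, h1u, hmu, σ, hρσ, hσρ, hXY, hYX, hd, hu, hybe⟩
end

section
/- Let (A, ρ, t_d, t_u) be an oriented quantum algebra over k, and let ((𝒜, 𝝆, 𝐬, 𝐭_d, 𝐭_u), π) be the doubling construction with projection π onto the first factor. Suppose (A', ρ', s', t_d', t_u') satisfies: (A', ρ', s') is a quantum algebra, (A', ρ', t_d', t_u') is an oriented quantum algebra, t_d', t_u' commute with s', and t_d' ∘ t_u' = s'^{-2}. If f : (A', ρ', t_d', t_u') → (A, ρ, t_d, t_u) is a morphism of oriented quantum algebras, then there is a unique morphism F : A' → 𝒜 (compatible with all the structure, i.e., an algebra map with (F ⊗ F)(ρ') = 𝝆, 𝐬 ∘ F = F ∘ s', 𝐭_d ∘ F = F ∘ t_d', 𝐭_u ∘ F = F ∘ t_u') such that π ∘ F = f; explicitly F(x) = f(x) ⊕ f(s'(x)). -/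
open TensorProduct

/-! The lift is forced: `π ∘ F = f` fixes the first component of `F`, and `𝐬 ∘ F = F ∘ s'`
then fixes the second one as `f ∘ s'`. Conversely `F = f ⊕ f ∘ s'` is multiplicative because
`s'` is an antihomomorphism, and it intertwines `𝐬` with `s'` because
`t_d⁻¹ t_u⁻¹ ∘ f = f ∘ s'²`, which follows from `t_d t_u ∘ f = f ∘ s_d s_u = f ∘ s'⁻²`.
Finally `(F ⊗ F)(ρ')` splits into four blocks: `(f ⊗ f)(ρ') = ρ`;
`(f s' ⊗ f s')(ρ') = ρ` since `(s' ⊗ s')(ρ') = ρ'`; `(f s' ⊗ f)(ρ') = ρ⁻¹` as the image of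
`(s' ⊗ 1)(ρ') = ρ'⁻¹`; and `(f ⊗ f s')(ρ') = (f s' ⊗ f s'²)(ρ') = (1 ⊗ t_d⁻¹ t_u⁻¹)(ρ⁻¹)`. -/

theorem inv_comp_inv_comp_eq_comp_sq {k M N : Type*} [CommSemiring k] [AddCommMonoid M]
    [Module k M] [AddCommMonoid N] [Module k N] {f : M →ₗ[k] N} {sd su s' : M →ₗ[k] M}
    {td tu td' tu' : N →ₗ[k] N} (htd : td' ∘ₗ td = LinearMap.id) (htu : tu' ∘ₗ tu = LinearMap.id)
    (hcomm : td ∘ₗ tu = tu ∘ₗ td) (hfd : td ∘ₗ f = f ∘ₗ sd) (hfu : tu ∘ₗ f = f ∘ₗ su)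
    (hs2 : (sd ∘ₗ su) ∘ₗ (s' ∘ₗ s') = LinearMap.id) :
    td' ∘ₗ tu' ∘ₗ f = f ∘ₗ s' ∘ₗ s' := by
  have hf : f ∘ₗ sd ∘ₗ su = tu ∘ₗ td ∘ₗ f := by
    rw [← LinearMap.comp_assoc, ← hfd, LinearMap.comp_assoc, ← hfu, ← LinearMap.comp_assoc,
      hcomm, LinearMap.comp_assoc]
  calc td' ∘ₗ tu' ∘ₗ f = td' ∘ₗ tu' ∘ₗ f ∘ₗ (sd ∘ₗ su) ∘ₗ (s' ∘ₗ s') := by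
        rw [hs2, LinearMap.comp_id]
    _ = (td' ∘ₗ (tu' ∘ₗ tu) ∘ₗ td) ∘ₗ f ∘ₗ s' ∘ₗ s' := by
        rw [← LinearMap.comp_assoc (s' ∘ₗ s') (sd ∘ₗ su) f, hf]
        simp only [LinearMap.comp_assoc]
    _ = f ∘ₗ s' ∘ₗ s' := by rw [htu, LinearMap.id_comp, htd, LinearMap.id_comp]

theorem map_comp_eq_of_mul_map_eq_one {k A A' : Type*} [CommSemiring k] [Semiring A]
    [Algebra k A] [Semiring A'] [Algebra k A'] (f : A' →ₐ[k] A) {s' : A' →ₗ[k] A'} {ρ' : A' ⊗[k] A'}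
    (hρ' : ρ' * TensorProduct.map s' LinearMap.id ρ' = 1) {ρ ρinv : A ⊗[k] A}
    (hf : TensorProduct.map f.toLinearMap f.toLinearMap ρ' = ρ) (hρ : ρinv * ρ = 1) :
    TensorProduct.map (f.toLinearMap ∘ₗ s') f.toLinearMap ρ' = ρinv := by
  refine (left_inv_eq_right_inv hρ ?_).symm
  calc ρ * TensorProduct.map (f.toLinearMap ∘ₗ s') f.toLinearMap ρ'
      = TensorProduct.map f.toLinearMap f.toLinearMap ρ' *
          TensorProduct.map f.toLinearMap f.toLinearMap
            (TensorProduct.map s' LinearMap.id ρ') := by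
        rw [TensorProduct.map_map, LinearMap.comp_id, hf]
    _ = Algebra.TensorProduct.map f f (ρ' * TensorProduct.map s' LinearMap.id ρ') :=
        (map_mul (Algebra.TensorProduct.map f f) _ _).symm
    _ = 1 := by rw [hρ', map_one]

section DoubleLift

variable {k A A' : Type*} [Field k] [Ring A] [Algebra k A] [Ring A'] [Algebra k A']

def doubleLift (f : A' →ₗ[k] A) (s' : A' →ₗ[k] A') : A' →ₗ[k] A × Aᵐᵒᵖ :=
  LinearMap.prod f (opL k A ∘ₗ f ∘ₗ s')

@[simp]
theorem doubleLift_apply (f : A' →ₗ[k] A) (s' : A' →ₗ[k] A') (x : A') :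
    doubleLift f s' x = (f x, MulOpposite.op (f (s' x))) :=
  rfl

theorem doubleLift_eq_inlA_add_inrA (f : A' →ₗ[k] A) (s' : A' →ₗ[k] A') :
    doubleLift f s' = inlA k A ∘ₗ f + inrA k A ∘ₗ f ∘ₗ s' := by
  ext x <;> simp [inlA, inrA, opL]

theorem fst_comp_doubleLift (f : A' →ₗ[k] A) (s' : A' →ₗ[k] A') :
    LinearMap.fst k A Aᵐᵒᵖ ∘ₗ doubleLift f s' = f :=
  rfl

theorem doubleLift_mul {f : A' →ₗ[k] A} {s' : A' →ₗ[k] A'}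
    (hf : ∀ x y, f (x * y) = f x * f y) (hs' : ∀ x y, s' (x * y) = s' y * s' x) (x y : A') :
    doubleLift f s' (x * y) = doubleLift f s' x * doubleLift f s' y := by
  simp [hf, hs']

theorem doubleLift_one {f : A' →ₗ[k] A} {s' : A' →ₗ[k] A'} (hf : f 1 = 1) (hs' : s' 1 = 1) :
    doubleLift f s' 1 = 1 := by
  simp [hf, hs']

theorem doubleT_comp_doubleLift {f : A' →ₗ[k] A} {s' σ : A' →ₗ[k] A'} {t : A →ₗ[k] A}
    (hf : t ∘ₗ f = f ∘ₗ σ) (hσ : σ ∘ₗ s' = s' ∘ₗ σ) :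
    doubleT t ∘ₗ doubleLift f s' = doubleLift f s' ∘ₗ σ := by
  ext x
  · exact LinearMap.congr_fun hf x
  · simp [doubleT, ← LinearMap.comp_apply t f, hf, ← LinearMap.comp_apply σ s', hσ]

theorem doubleS_comp_doubleLift {f : A' →ₗ[k] A} {s' : A' →ₗ[k] A'} {td' tu' : A →ₗ[k] A}
    (htwist : td' ∘ₗ tu' ∘ₗ f = f ∘ₗ s' ∘ₗ s') :
    doubleS td' tu' ∘ₗ doubleLift f s' = doubleLift f s' ∘ₗ s' := by
  ext x
  · rfl
  · simpa [doubleS] using LinearMap.congr_fun htwist x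

theorem eq_doubleLift {F : A' →ₗ[k] A × Aᵐᵒᵖ} {f : A' →ₗ[k] A} {s' : A' →ₗ[k] A'}
    {td' tu' : A →ₗ[k] A} (hS : doubleS td' tu' ∘ₗ F = F ∘ₗ s')
    (hπ : LinearMap.fst k A Aᵐᵒᵖ ∘ₗ F = f) :
    F = doubleLift f s' := by
  subst hπ
  ext x
  · rfl
  · simpa [doubleS] using congrArg (MulOpposite.op ∘ Prod.fst) (LinearMap.congr_fun hS x)

theorem map_doubleLift_eq_doubleRho {f : A' →ₗ[k] A} {s' : A' →ₗ[k] A'} {ρ' : A' ⊗[k] A'}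
    {ρ ρinv : A ⊗[k] A} {td' tu' : A →ₗ[k] A} (hs : TensorProduct.map s' s' ρ' = ρ')
    (hf : TensorProduct.map f f ρ' = ρ) (hinv : TensorProduct.map (f ∘ₗ s') f ρ' = ρinv)
    (htwist : td' ∘ₗ tu' ∘ₗ f = f ∘ₗ s' ∘ₗ s') :
    TensorProduct.map (doubleLift f s') (doubleLift f s') ρ' = doubleRho ρ ρinv td' tu' := by
  have hll : TensorProduct.map (inlA k A ∘ₗ f) (inlA k A ∘ₗ f) ρ'
      = TensorProduct.map (inlA k A) (inlA k A) ρ := by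
    rw [← hf, TensorProduct.map_map]
  have hlr : TensorProduct.map (inlA k A ∘ₗ f) (inrA k A ∘ₗ f ∘ₗ s') ρ'
      = TensorProduct.map (inlA k A) (inrA k A ∘ₗ td' ∘ₗ tu') ρinv := calc
    _ = TensorProduct.map (inlA k A ∘ₗ f) (inrA k A ∘ₗ f ∘ₗ s')
          (TensorProduct.map s' s' ρ') := by
        rw [hs]
    _ = TensorProduct.map (inlA k A) (inrA k A ∘ₗ td' ∘ₗ tu')
          (TensorProduct.map (f ∘ₗ s') f ρ') := by
        simp only [TensorProduct.map_map, LinearMap.comp_assoc, htwist]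
    _ = _ := by rw [hinv]
  have hrl : TensorProduct.map (inrA k A ∘ₗ f ∘ₗ s') (inlA k A ∘ₗ f) ρ'
      = TensorProduct.map (inrA k A) (inlA k A) ρinv := by
    rw [← hinv, TensorProduct.map_map]
  have hrr : TensorProduct.map (inrA k A ∘ₗ f ∘ₗ s') (inrA k A ∘ₗ f ∘ₗ s') ρ'
      = TensorProduct.map (inrA k A) (inrA k A) ρ := calc
    _ = TensorProduct.map (inrA k A) (inrA k A)
          (TensorProduct.map f f (TensorProduct.map s' s' ρ')) := by
        simp only [TensorProduct.map_map]
    _ = _ := by rw [hs, hf]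
  rw [doubleLift_eq_inlA_add_inrA, TensorProduct.map_add_left, TensorProduct.map_add_right,
    TensorProduct.map_add_right, LinearMap.add_apply, LinearMap.add_apply, LinearMap.add_apply,
    hll, hlr, hrl, hrr, doubleRho]
  abel

end DoubleLift

theorem doubling_universal_property_general {k A A' : Type*} [Field k] [Ring A] [Algebra k A]
    [Ring A'] [Algebra k A']
    (ρ ρinv : A ⊗[k] A) (td tu td' tu' : A →ₗ[k] A)
    (h : IsOrientedQuantumAlgebra ρ td tu)
    (hρ2 : ρinv * ρ = 1)
    (htd2 : td' ∘ₗ td = LinearMap.id)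
    (htu2 : tu' ∘ₗ tu = LinearMap.id)
    (ρ' : A' ⊗[k] A') (s' sd su : A' →ₗ[k] A')
    (hQA : IsQuantumAlgebra ρ' s')
    (hcs1 : sd ∘ₗ s' = s' ∘ₗ sd) (hcs2 : su ∘ₗ s' = s' ∘ₗ su)
    (hs2 : (sd ∘ₗ su) ∘ₗ (s' ∘ₗ s') = LinearMap.id)
    (f : A' →ₗ[k] A)
    (hf1 : ∀ x y : A', f (x * y) = f x * f y) (hf2 : f 1 = 1)
    (hf3 : TensorProduct.map f f ρ' = ρ)
    (hf4 : td ∘ₗ f = f ∘ₗ sd) (hf5 : tu ∘ₗ f = f ∘ₗ su) :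
    ((∀ x y : A', (LinearMap.prod f (opL k A ∘ₗ f ∘ₗ s')) (x * y)
        = (LinearMap.prod f (opL k A ∘ₗ f ∘ₗ s')) x * (LinearMap.prod f (opL k A ∘ₗ f ∘ₗ s')) y) ∧
      (LinearMap.prod f (opL k A ∘ₗ f ∘ₗ s')) 1 = 1 ∧
      TensorProduct.map (LinearMap.prod f (opL k A ∘ₗ f ∘ₗ s'))
          (LinearMap.prod f (opL k A ∘ₗ f ∘ₗ s')) ρ' = doubleRho ρ ρinv td' tu' ∧
      doubleS td' tu' ∘ₗ (LinearMap.prod f (opL k A ∘ₗ f ∘ₗ s'))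
        = (LinearMap.prod f (opL k A ∘ₗ f ∘ₗ s')) ∘ₗ s' ∧
      doubleT td ∘ₗ (LinearMap.prod f (opL k A ∘ₗ f ∘ₗ s'))
        = (LinearMap.prod f (opL k A ∘ₗ f ∘ₗ s')) ∘ₗ sd ∧
      doubleT tu ∘ₗ (LinearMap.prod f (opL k A ∘ₗ f ∘ₗ s'))
        = (LinearMap.prod f (opL k A ∘ₗ f ∘ₗ s')) ∘ₗ su ∧
      LinearMap.fst k A Aᵐᵒᵖ ∘ₗ (LinearMap.prod f (opL k A ∘ₗ f ∘ₗ s')) = f) ∧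
    (∀ F : A' →ₗ[k] A × Aᵐᵒᵖ,
      ((∀ x y : A', F (x * y) = F x * F y) ∧ F 1 = 1 ∧
        TensorProduct.map F F ρ' = doubleRho ρ ρinv td' tu' ∧
        doubleS td' tu' ∘ₗ F = F ∘ₗ s' ∧
        doubleT td ∘ₗ F = F ∘ₗ sd ∧ doubleT tu ∘ₗ F = F ∘ₗ su ∧
        LinearMap.fst k A Aᵐᵒᵖ ∘ₗ F = f) →
      F = LinearMap.prod f (opL k A ∘ₗ f ∘ₗ s')) := by
  obtain ⟨-, hs'1, hs'mul, hρ', -, hs'ρ', -⟩ := hQA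
  obtain ⟨-, -, -, -, -, -, htdtu, -⟩ := h
  have htwist := inv_comp_inv_comp_eq_comp_sq htd2 htu2 htdtu hf4 hf5 hs2
  have hinv := map_comp_eq_of_mul_map_eq_one (AlgHom.ofLinearMap f hf2 hf1) hρ' hf3 hρ2
  exact ⟨⟨doubleLift_mul hf1 hs'mul, doubleLift_one hf2 hs'1,
    map_doubleLift_eq_doubleRho hs'ρ' hf3 hinv htwist, doubleS_comp_doubleLift htwist,
    doubleT_comp_doubleLift hf4 hcs1, doubleT_comp_doubleLift hf5 hcs2, fst_comp_doubleLift f s'⟩,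
    fun F ⟨_, _, _, hS, _, _, hπ⟩ => eq_doubleLift hS hπ⟩

/-- Universal (cofree) property of the doubling construction: given an object
`(A', ρ', s', sd, su)` of the category `𝒞_q` and a morphism of oriented quantum algebras
`f : (A', ρ', sd, su) → (A, ρ, t_d, t_u)`, the map `F(x) = f(x) ⊕ f(s'(x))` is the unique
morphism `F : (A', ρ', s', sd, su) → (𝒜, 𝝆, 𝐬, 𝐭_d, 𝐭_u)` with `π ∘ F = f`. -/
theorem doubling_universal_property {k A A' : Type*} [Field k] [Ring A] [Algebra k A]
    [Ring A'] [Algebra k A']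
    (ρ ρinv : A ⊗[k] A) (td tu td' tu' : A →ₗ[k] A)
    (h : IsOrientedQuantumAlgebra ρ td tu)
    (hρ1 : ρ * ρinv = 1) (hρ2 : ρinv * ρ = 1)
    (htd1 : td ∘ₗ td' = LinearMap.id) (htd2 : td' ∘ₗ td = LinearMap.id)
    (htu1 : tu ∘ₗ tu' = LinearMap.id) (htu2 : tu' ∘ₗ tu = LinearMap.id)
    (ρ' : A' ⊗[k] A') (s' sd su : A' →ₗ[k] A')
    (hQA : IsQuantumAlgebra ρ' s')
    (hOQA : IsOrientedQuantumAlgebra ρ' sd su)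
    (hcs1 : sd ∘ₗ s' = s' ∘ₗ sd) (hcs2 : su ∘ₗ s' = s' ∘ₗ su)
    (hs2 : (sd ∘ₗ su) ∘ₗ (s' ∘ₗ s') = LinearMap.id)
    (hs2' : (s' ∘ₗ s') ∘ₗ (sd ∘ₗ su) = LinearMap.id)
    (f : A' →ₗ[k] A)
    (hf1 : ∀ x y : A', f (x * y) = f x * f y) (hf2 : f 1 = 1)
    (hf3 : TensorProduct.map f f ρ' = ρ)
    (hf4 : td ∘ₗ f = f ∘ₗ sd) (hf5 : tu ∘ₗ f = f ∘ₗ su) :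
    ((∀ x y : A', (LinearMap.prod f (opL k A ∘ₗ f ∘ₗ s')) (x * y)
        = (LinearMap.prod f (opL k A ∘ₗ f ∘ₗ s')) x * (LinearMap.prod f (opL k A ∘ₗ f ∘ₗ s')) y) ∧
      (LinearMap.prod f (opL k A ∘ₗ f ∘ₗ s')) 1 = 1 ∧
      TensorProduct.map (LinearMap.prod f (opL k A ∘ₗ f ∘ₗ s'))
          (LinearMap.prod f (opL k A ∘ₗ f ∘ₗ s')) ρ' = doubleRho ρ ρinv td' tu' ∧
      doubleS td' tu' ∘ₗ (LinearMap.prod f (opL k A ∘ₗ f ∘ₗ s'))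
        = (LinearMap.prod f (opL k A ∘ₗ f ∘ₗ s')) ∘ₗ s' ∧
      doubleT td ∘ₗ (LinearMap.prod f (opL k A ∘ₗ f ∘ₗ s'))
        = (LinearMap.prod f (opL k A ∘ₗ f ∘ₗ s')) ∘ₗ sd ∧
      doubleT tu ∘ₗ (LinearMap.prod f (opL k A ∘ₗ f ∘ₗ s'))
        = (LinearMap.prod f (opL k A ∘ₗ f ∘ₗ s')) ∘ₗ su ∧
      LinearMap.fst k A Aᵐᵒᵖ ∘ₗ (LinearMap.prod f (opL k A ∘ₗ f ∘ₗ s')) = f) ∧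
    (∀ F : A' →ₗ[k] A × Aᵐᵒᵖ,
      ((∀ x y : A', F (x * y) = F x * F y) ∧ F 1 = 1 ∧
        TensorProduct.map F F ρ' = doubleRho ρ ρinv td' tu' ∧
        doubleS td' tu' ∘ₗ F = F ∘ₗ s' ∧
        doubleT td ∘ₗ F = F ∘ₗ sd ∧ doubleT tu ∘ₗ F = F ∘ₗ su ∧
        LinearMap.fst k A Aᵐᵒᵖ ∘ₗ F = f) →
      F = LinearMap.prod f (opL k A ∘ₗ f ∘ₗ s')) :=
  doubling_universal_property_general ρ ρinv td tu td' tu' h hρ2 htd2 htu2 ρ' s' sd su hQA hcs1 hcs2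
    hs2 f hf1 hf2 hf3 hf4 hf5
end

section
/- If (C, b, T_d, T_u) is an oriented quantum coalgebra over a field k, then (C, b^{-1}, T_d^{-1}, T_u^{-1}) is an oriented quantum coalgebra over k. -/
open TensorProduct

/-!
In the convolution algebra of linear forms on `C ⊗ C`, the hypothesis that `b⁻¹` is the inverse
form says that `b` is a unit with inverse `b⁻¹`. Invariance of `b⁻¹` under `T_d` and `T_u` then
follows from uniqueness of inverses: compatibility of `T` with the forms makes `b⁻¹ ∘ (T × T)`
another left inverse of `b = b ∘ (T × T)`. Axiom (qc.3) is the Yang–Baxter relation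
`b₁₂ b₁₃ b₂₃ = b₂₃ b₁₃ b₁₂` between the legs of `b` in the convolution algebra of `C ⊗ C ⊗ C`;
the legs are images of `b` under monoid homomorphisms (precomposition with coalgebra maps), so
inverting both sides gives the relation for `b⁻¹`. The remaining axioms transfer by moving
`T⁻¹` across the invariant forms, `b (T⁻¹ x) y = b x (T y)`.
-/

open TensorProduct Coalgebra WithConv

lemma exists_eq_fin_sum_tmul {R M N : Type*} [CommSemiring R] [AddCommMonoid M] [Module R M]
    [AddCommMonoid N] [Module R N] (t : M ⊗[R] N) :
    ∃ (n : ℕ) (a : Fin n → M) (b : Fin n → N), t = ∑ i, a i ⊗ₜ[R] b i := by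
  obtain ⟨S, hS⟩ := TensorProduct.exists_finset t
  refine ⟨S.card, fun i => (S.equivFin.symm i : M × N).1,
    fun i => (S.equivFin.symm i : M × N).2, ?_⟩
  rw [hS, ← Finset.sum_attach S (fun p => p.1 ⊗ₜ[R] p.2)]
  exact (Equiv.sum_comp S.equivFin.symm (fun p : S => (p : M × N).1 ⊗ₜ[R] (p : M × N).2)).symm

lemma IsInverseForm.symm {k C D : Type*} [Field k] [AddCommGroup C] [Module k C]
    [AddCommGroup D] [Module k D] {ΔC : C →ₗ[k] C ⊗[k] C} {εC : C →ₗ[k] k}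
    {ΔD : D →ₗ[k] D ⊗[k] D} {εD : D →ₗ[k] k} {b b' : C →ₗ[k] D →ₗ[k] k}
    (h : IsInverseForm ΔC εC ΔD εD b b') : IsInverseForm ΔC εC ΔD εD b' b :=
  fun c d n m c₁ c₂ d₁ d₂ hc hd => (h c d n m c₁ c₂ d₁ d₂ hc hd).symm

section Invariance

variable {R M : Type*} [CommSemiring R] [AddCommMonoid M] [Module R M]

abbrev IsInvariantForm (β : M →ₗ[R] M →ₗ[R] R) (T : M →ₗ[R] M) : Prop :=
  ∀ x y, β (T x) (T y) = β x y

variable {β : M →ₗ[R] M →ₗ[R] R} {T T' : M →ₗ[R] M}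

namespace IsInvariantForm

lemma apply_left (hβ : IsInvariantForm β T) (hT : Function.LeftInverse T T') (x y : M) :
    β (T' x) y = β x (T y) := by
  rw [← hβ, hT]

lemma apply_right (hβ : IsInvariantForm β T) (hT : Function.LeftInverse T T') (x y : M) :
    β x (T' y) = β (T x) y := by
  rw [← hβ, hT]

lemma of_leftInverse (hβ : IsInvariantForm β T) (hT : Function.LeftInverse T T') :
    IsInvariantForm β T' := fun x y => by
  rw [← hβ, hT, hT]

end IsInvariantForm

end Invariance

lemma qc2_iff {k C : Type*} [Field k] [AddCommGroup C] [Module k C]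
    {b : C →ₗ[k] C →ₗ[k] k} {Td Tu : C →ₗ[k] C} :
    QC2 b Td Tu ↔ IsInvariantForm b Td ∧ IsInvariantForm b Tu := by
  simp only [QC2, forall_and]

section InverseMaps

variable {k C : Type*} [Field k] [AddCommGroup C] [Module k C]
  {Δ : C →ₗ[k] C ⊗[k] C} {ε : C →ₗ[k] k}

lemma IsCoalgAutoWrt.of_leftInverse {𝒮 : Set (C →ₗ[k] C →ₗ[k] k)} {T T' : C →ₗ[k] C}
    (hT : IsCoalgAutoWrt Δ ε 𝒮 T) (h𝒮 : ∀ β ∈ 𝒮, IsInvariantForm β T)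
    (h₁ : Function.LeftInverse T T') (h₂ : Function.LeftInverse T' T) :
    IsCoalgAutoWrt Δ ε 𝒮 T' := by
  refine ⟨⟨h₁.injective, h₂.surjective⟩, fun c => by rw [← hT.2.1, h₁], ?_⟩
  intro β hβ β' hβ' c d e n m c₁ c₂ f₁ f₂ hc hf
  have hTc : Δ (T (T' c)) = ∑ i, c₁ i ⊗ₜ[k] c₂ i := by rw [h₁]; exact hc
  obtain ⟨hl, hr⟩ := hT.2.2 β hβ β' hβ' (T' c) (T d) (T e) m n f₁ f₂ c₁ c₂ hf hTc
  constructor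
  · calc ∑ i, β (T' (c₁ i)) d * β' (T' (c₂ i)) e
        = ∑ i, β (c₁ i) (T d) * β' (c₂ i) (T e) := by
          simp only [(h𝒮 β hβ).apply_left h₁, (h𝒮 β' hβ').apply_left h₁]
      _ = ∑ j, β (f₁ j) d * β' (f₂ j) e := by
          simp only [← hl, h𝒮 β hβ, h𝒮 β' hβ']
  · calc ∑ i, β d (T' (c₁ i)) * β' e (T' (c₂ i))
        = ∑ i, β (T d) (c₁ i) * β' (T e) (c₂ i) := by
          simp only [(h𝒮 β hβ).apply_right h₁, (h𝒮 β' hβ').apply_right h₁]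
      _ = ∑ j, β d (f₁ j) * β' e (f₂ j) := by
          simp only [← hr, h𝒮 β hβ, h𝒮 β' hβ']

lemma QC1.of_leftInverse {b b' : C →ₗ[k] C →ₗ[k] k} {Td Tu Td' Tu' : C →ₗ[k] C}
    (h : QC1 Δ ε b b' Td Tu)
    (hTd : IsCoalgAutoWrt Δ ε {b, b'} Td) (hTu : IsCoalgAutoWrt Δ ε {b, b'} Tu)
    (hbd : IsInvariantForm b Td) (hbu : IsInvariantForm b Tu)
    (hb'd : IsInvariantForm b' Td) (hb'u : IsInvariantForm b' Tu)
    (hTd' : Function.LeftInverse Td Td') (hTu' : Function.LeftInverse Tu Tu') :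
    QC1 Δ ε b' b Td' Tu' := by
  have hb : b ∈ ({b, b'} : Set _) := Set.mem_insert _ _
  have hb' : b' ∈ ({b, b'} : Set _) := Set.mem_insert_of_mem _ rfl
  intro c d n p c₁ c₂ d₁ d₂ hc hd
  obtain ⟨q, f₁, f₂, hf⟩ := exists_eq_fin_sum_tmul (Δ (Tu c))
  obtain ⟨r, g₁, g₂, hg⟩ := exists_eq_fin_sum_tmul (Δ (Td d))
  have hε : ε (Tu c) * ε (Td d) = ε c * ε d := by rw [hTu.2.1, hTd.2.1]
  -- each half becomes the other half of (qc.1) for `b`, evaluated at `T_u c` and `T_d d`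
  constructor
  · calc ∑ i, ∑ j, b' (c₁ i) (Tu' (d₂ j)) * b (Td' (c₂ i)) (d₁ j)
        = ∑ j, ∑ i, b' (Tu (c₁ i)) (d₂ j) * b (Tu (c₂ i)) (Tu (Td (d₁ j))) := by
          rw [Finset.sum_comm]
          refine Finset.sum_congr rfl fun j _ => Finset.sum_congr rfl fun i _ => ?_
          rw [hb'u.apply_right hTu', hbd.apply_left hTd', hbu]
      _ = ∑ l, ∑ j, b (Tu' (f₂ l)) (Td (d₁ j)) * b' (Td (f₁ l)) (Td (d₂ j)) := by
          simp only [(hTu.2.2 b' hb' b hb c _ _ n q c₁ c₂ f₁ f₂ hc hf).1]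
          rw [Finset.sum_comm]
          refine Finset.sum_congr rfl fun l _ => Finset.sum_congr rfl fun j _ => ?_
          rw [hb'd, hbu.apply_left hTu', mul_comm]
      _ = ∑ l, ∑ m, b (Tu' (f₂ l)) (g₁ m) * b' (Td (f₁ l)) (g₂ m) := by
          simp only [(hTd.2.2 b hb b' hb' d _ _ p r d₁ d₂ g₁ g₂ hd hg).2]
      _ = ∑ l, ∑ m, b' (Td (f₁ l)) (g₂ m) * b (f₂ l) (Tu (g₁ m)) := by
          simp only [hbu.apply_left hTu', mul_comm]
      _ = ε c * ε d := (h (Tu c) (Td d) q r f₁ f₂ g₁ g₂ hf hg).2.trans hε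
  · calc ∑ i, ∑ j, b (Td' (c₁ i)) (d₂ j) * b' (c₂ i) (Tu' (d₁ j))
        = ∑ j, ∑ i, b (Tu (c₁ i)) (Tu (Td (d₂ j))) * b' (Tu (c₂ i)) (d₁ j) := by
          rw [Finset.sum_comm]
          refine Finset.sum_congr rfl fun j _ => Finset.sum_congr rfl fun i _ => ?_
          rw [hb'u.apply_right hTu', hbd.apply_left hTd', hbu]
      _ = ∑ l, ∑ j, b' (Td (f₂ l)) (Td (d₁ j)) * b (Tu' (f₁ l)) (Td (d₂ j)) := by
          simp only [(hTu.2.2 b hb b' hb' c _ _ n q c₁ c₂ f₁ f₂ hc hf).1]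
          rw [Finset.sum_comm]
          refine Finset.sum_congr rfl fun l _ => Finset.sum_congr rfl fun j _ => ?_
          rw [hb'd, hbu.apply_left hTu', mul_comm]
      _ = ∑ l, ∑ m, b' (Td (f₂ l)) (g₁ m) * b (Tu' (f₁ l)) (g₂ m) := by
          simp only [(hTd.2.2 b' hb' b hb d _ _ p r d₁ d₂ g₁ g₂ hd hg).2]
      _ = ∑ l, ∑ m, b (f₁ l) (Tu (g₂ m)) * b' (Td (f₂ l)) (g₁ m) := by
          simp only [hbu.apply_left hTu', mul_comm]
      _ = ε c * ε d := (h (Tu c) (Td d) q r f₁ f₂ g₁ g₂ hf hg).1.trans hε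

end InverseMaps

section Convolution

variable {R A B : Type*} [CommSemiring R] [AddCommMonoid A] [Module R A] [Coalgebra R A]
  [AddCommMonoid B] [Module R B] [Coalgebra R B]
  {ι κ : Type*} [Fintype ι] [Fintype κ] {a : A} {b : B} {a₁ a₂ : ι → A} {b₁ b₂ : κ → B}

lemma comul_tmul_eq_sum (ha : comul a = ∑ i, a₁ i ⊗ₜ[R] a₂ i)
    (hb : comul b = ∑ j, b₁ j ⊗ₜ[R] b₂ j) :
    comul (a ⊗ₜ[R] b) = ∑ p : ι × κ, (a₁ p.1 ⊗ₜ[R] b₁ p.2) ⊗ₜ[R] (a₂ p.1 ⊗ₜ[R] b₂ p.2) := by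
  simp only [TensorProduct.comul_tmul, ha, hb, tmul_sum, sum_tmul, map_sum,
    AlgebraTensorModule.tensorTensorTensorComm_tmul, Fintype.sum_prod_type_right]

lemma convMul_tmul_apply {S : Type*} [CommSemiring S] [Algebra R S]
    (f g : WithConv (A ⊗[R] B →ₗ[R] S)) (ha : comul a = ∑ i, a₁ i ⊗ₜ[R] a₂ i)
    (hb : comul b = ∑ j, b₁ j ⊗ₜ[R] b₂ j) :
    (f * g) (a ⊗ₜ[R] b) = ∑ i, ∑ j, f (a₁ i ⊗ₜ b₁ j) * g (a₂ i ⊗ₜ b₂ j) := by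
  simp [comul_tmul_eq_sum ha hb, Fintype.sum_prod_type]

end Convolution

section Counit

variable {R C : Type*} [CommSemiring R] [AddCommMonoid C] [Module R C] [Coalgebra R C]
  {ι : Type*} [Fintype ι] {c : C} {c₁ c₂ : ι → C}

lemma sum_counit_mul_apply (φ : C →ₗ[R] R) (hc : comul c = ∑ i, c₁ i ⊗ₜ[R] c₂ i) :
    ∑ i, counit (c₁ i) * φ (c₂ i) = φ c := by
  simpa using congrArg φ (sum_counit_smul ⟨Finset.univ, c₁, c₂, hc.symm⟩)

lemma sum_apply_mul_counit (φ : C →ₗ[R] R) (hc : comul c = ∑ i, c₁ i ⊗ₜ[R] c₂ i) :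
    ∑ i, φ (c₁ i) * counit (c₂ i) = φ c := by
  simpa [hc] using congrArg (lift ((LinearMap.mul R R).compl₁₂ φ LinearMap.id))
    (lTensor_counit_comul (R := R) c)

end Counit

section Precomp

variable {R B C S : Type*} [CommSemiring R] [AddCommMonoid B] [Module R B] [Coalgebra R B]
  [AddCommMonoid C] [Module R C] [Coalgebra R C] [Semiring S] [Algebra R S]

noncomputable def convPrecomp (π : B →ₗc[R] C) :
    WithConv (C →ₗ[R] S) →* WithConv (B →ₗ[R] S) where
  toFun f := toConv (f.ofConv ∘ₗ π.toLinearMap)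
  map_one' := by ext; simp
  map_mul' f g := WithConv.ext (LinearMap.convMul_comp_coalgHom_distrib f g π)

@[simp] lemma convPrecomp_apply (π : B →ₗc[R] C) (f : WithConv (C →ₗ[R] S)) (x : B) :
    convPrecomp π f x = f (π x) := rfl

end Precomp

section ConvolutionInverse

variable {k C : Type*} [Field k] [AddCommGroup C] [Module k C] [Coalgebra k C]
  {D : Type*} [AddCommGroup D] [Module k D] [Coalgebra k D]

lemma convMul_lift_eq_one {β γ : C →ₗ[k] D →ₗ[k] k}
    (h : ∀ (c : C) (d : D) (n m : ℕ) (c₁ c₂ : Fin n → C) (d₁ d₂ : Fin m → D),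
      comul c = ∑ i, c₁ i ⊗ₜ[k] c₂ i → comul d = ∑ j, d₁ j ⊗ₜ[k] d₂ j →
      ∑ i, ∑ j, β (c₁ i) (d₁ j) * γ (c₂ i) (d₂ j) = counit c * counit d) :
    toConv (lift β) * toConv (lift γ) = 1 := by
  ext c d
  obtain ⟨n, c₁, c₂, hc⟩ := exists_eq_fin_sum_tmul (comul (R := k) c)
  obtain ⟨m, d₁, d₂, hd⟩ := exists_eq_fin_sum_tmul (comul (R := k) d)
  simp only [AlgebraTensorModule.curry_apply, curry_apply, LinearMap.restrictScalars_self,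
    convMul_tmul_apply _ _ hc hd, lift.tmul, h c d n m c₁ c₂ d₁ d₂ hc hd]
  simp [mul_comm]

lemma IsInverseForm.convMul_eq_one {b b' : C →ₗ[k] D →ₗ[k] k}
    (h : IsInverseForm comul counit comul counit b b') :
    toConv (lift b') * toConv (lift b) = 1 ∧ toConv (lift b) * toConv (lift b') = 1 :=
  ⟨convMul_lift_eq_one fun c d n m c₁ c₂ d₁ d₂ hc hd => (h c d n m c₁ c₂ d₁ d₂ hc hd).1,
    convMul_lift_eq_one fun c d n m c₁ c₂ d₁ d₂ hc hd => (h c d n m c₁ c₂ d₁ d₂ hc hd).2⟩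

lemma IsCoalgAutoWrt.isInvariantForm_of_isInverseForm {b b' : C →ₗ[k] C →ₗ[k] k}
    {T : C →ₗ[k] C} (hT : IsCoalgAutoWrt comul counit {b, b'} T)
    (h : IsInverseForm comul counit comul counit b b') (hb : IsInvariantForm b T) :
    IsInvariantForm b' T := by
  have hb_mem : b ∈ ({b, b'} : Set _) := Set.mem_insert _ _
  have hb'_mem : b' ∈ ({b, b'} : Set _) := Set.mem_insert_of_mem _ rfl
  have hinv : toConv (lift (b'.compl₁₂ T T)) * toConv (lift b) = 1 := by
    refine convMul_lift_eq_one fun c d n m c₁ c₂ d₁ d₂ hc hd => ?_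
    obtain ⟨p, f₁, f₂, hf⟩ := exists_eq_fin_sum_tmul (comul (R := k) (T c))
    obtain ⟨q, g₁, g₂, hg⟩ := exists_eq_fin_sum_tmul (comul (R := k) (T d))
    calc ∑ i, ∑ j, b'.compl₁₂ T T (c₁ i) (d₁ j) * b (c₂ i) (d₂ j)
        = ∑ j, ∑ i, b' (T (c₁ i)) (T (d₁ j)) * b (T (c₂ i)) (T (d₂ j)) := by
          rw [Finset.sum_comm]; simp only [LinearMap.compl₁₂_apply, hb]
      _ = ∑ l, ∑ j, b' (f₁ l) (T (d₁ j)) * b (f₂ l) (T (d₂ j)) := by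
          simp only [(hT.2.2 b' hb'_mem b hb_mem c _ _ n p c₁ c₂ f₁ f₂ hc hf).1]
          exact Finset.sum_comm
      _ = ∑ l, ∑ r, b' (f₁ l) (g₁ r) * b (f₂ l) (g₂ r) := by
          simp only [(hT.2.2 b' hb'_mem b hb_mem d _ _ m q d₁ d₂ g₁ g₂ hd hg).2]
      _ = counit c * counit d := by
          rw [(h (T c) (T d) p q f₁ f₂ g₁ g₂ hf hg).1, hT.2.1, hT.2.1]
  have h_eq := left_inv_eq_right_inv hinv h.convMul_eq_one.2
  intro x y
  simpa using congr($h_eq (x ⊗ₜ[k] y))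

end ConvolutionInverse

section Legs

variable {k C : Type*} [Field k] [AddCommGroup C] [Module k C] [Coalgebra k C]
  {D : Type*} [AddCommGroup D] [Module k D] [Coalgebra k D]

variable (C D) in
noncomputable def projLeft : C ⊗[k] D →ₗc[k] C :=
  (Coalgebra.TensorProduct.rid k k C).toCoalgHom.comp
    (CoalgHom.lTensor C (Coalgebra.counitCoalgHom k D))

variable (C D) in
noncomputable def projRight : C ⊗[k] D →ₗc[k] D :=
  (Coalgebra.TensorProduct.lid k D).toCoalgHom.comp
    (CoalgHom.rTensor D (Coalgebra.counitCoalgHom k C))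

@[simp] lemma projLeft_tmul (c : C) (d : D) :
    projLeft C D (c ⊗ₜ[k] d) = counit (R := k) d • c := rfl

@[simp] lemma projRight_tmul (c : C) (d : D) :
    projRight C D (c ⊗ₜ[k] d) = counit (R := k) c • d := rfl

variable (k C)

noncomputable abbrev leg₁₂ :
    WithConv (C ⊗[k] C →ₗ[k] k) →* WithConv ((C ⊗[k] C) ⊗[k] C →ₗ[k] k) :=
  convPrecomp (projLeft (C ⊗[k] C) C)

noncomputable abbrev leg₁₃ :
    WithConv (C ⊗[k] C →ₗ[k] k) →* WithConv ((C ⊗[k] C) ⊗[k] C →ₗ[k] k) :=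
  convPrecomp (CoalgHom.rTensor C (projLeft C C))

noncomputable abbrev leg₂₃ :
    WithConv (C ⊗[k] C →ₗ[k] k) →* WithConv ((C ⊗[k] C) ⊗[k] C →ₗ[k] k) :=
  convPrecomp (CoalgHom.rTensor C (projRight C C))

variable {k C}

@[simp] lemma leg₁₂_apply (β : C →ₗ[k] C →ₗ[k] k) (c d e : C) :
    leg₁₂ k C (toConv (lift β)) ((c ⊗ₜ d) ⊗ₜ e) = β c d * counit e := by
  simp [mul_comm]

@[simp] lemma leg₁₃_apply (β : C →ₗ[k] C →ₗ[k] k) (c d e : C) :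
    leg₁₃ k C (toConv (lift β)) ((c ⊗ₜ d) ⊗ₜ e) = counit d * β c e := by
  simp

@[simp] lemma leg₂₃_apply (β : C →ₗ[k] C →ₗ[k] k) (c d e : C) :
    leg₂₃ k C (toConv (lift β)) ((c ⊗ₜ d) ⊗ₜ e) = counit c * β d e := by
  simp

end Legs

section YangBaxter

variable {k C : Type*} [Field k] [AddCommGroup C] [Module k C] [Coalgebra k C]
  {c d e : C} {n m p : ℕ} {c₁ c₂ : Fin n → C} {d₁ d₂ : Fin m → C} {e₁ e₂ : Fin p → C}

lemma convMul_tmul_tmul_apply (F G : WithConv ((C ⊗[k] C) ⊗[k] C →ₗ[k] k))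
    (hc : comul c = ∑ i, c₁ i ⊗ₜ[k] c₂ i) (hd : comul d = ∑ j, d₁ j ⊗ₜ[k] d₂ j)
    (he : comul e = ∑ l, e₁ l ⊗ₜ[k] e₂ l) :
    (F * G) ((c ⊗ₜ d) ⊗ₜ e) =
      ∑ i, ∑ j, ∑ l, F ((c₁ i ⊗ₜ d₁ j) ⊗ₜ e₁ l) * G ((c₂ i ⊗ₜ d₂ j) ⊗ₜ e₂ l) := by
  rw [convMul_tmul_apply F G (comul_tmul_eq_sum hc hd) he, Fintype.sum_prod_type]

variable (β γ : C →ₗ[k] C →ₗ[k] k)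

lemma leg₁₂_mul_apply (F : WithConv ((C ⊗[k] C) ⊗[k] C →ₗ[k] k))
    (hc : comul c = ∑ i, c₁ i ⊗ₜ[k] c₂ i) (hd : comul d = ∑ j, d₁ j ⊗ₜ[k] d₂ j) :
    (leg₁₂ k C (toConv (lift β)) * F) ((c ⊗ₜ d) ⊗ₜ e) =
      ∑ i, ∑ j, β (c₁ i) (d₁ j) * F ((c₂ i ⊗ₜ d₂ j) ⊗ₜ e) := by
  obtain ⟨p, e₁, e₂, he⟩ := exists_eq_fin_sum_tmul (comul (R := k) e)
  rw [convMul_tmul_tmul_apply _ _ hc hd he]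
  refine Finset.sum_congr rfl fun i _ => Finset.sum_congr rfl fun j _ => ?_
  have h := sum_counit_mul_apply (F.ofConv ∘ₗ TensorProduct.mk k _ _ (c₂ i ⊗ₜ d₂ j)) he
  simp only [LinearMap.comp_apply, TensorProduct.mk_apply] at h
  rw [← h, Finset.mul_sum]
  simp only [leg₁₂_apply, mul_assoc]

lemma leg₂₃_mul_apply (F : WithConv ((C ⊗[k] C) ⊗[k] C →ₗ[k] k))
    (hd : comul d = ∑ j, d₁ j ⊗ₜ[k] d₂ j) (he : comul e = ∑ l, e₁ l ⊗ₜ[k] e₂ l) :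
    (leg₂₃ k C (toConv (lift β)) * F) ((c ⊗ₜ d) ⊗ₜ e) =
      ∑ j, ∑ l, β (d₁ j) (e₁ l) * F ((c ⊗ₜ d₂ j) ⊗ₜ e₂ l) := by
  obtain ⟨n, c₁, c₂, hc⟩ := exists_eq_fin_sum_tmul (comul (R := k) c)
  rw [convMul_tmul_tmul_apply _ _ hc hd he, Finset.sum_comm]
  refine Finset.sum_congr rfl fun j _ => ?_
  rw [Finset.sum_comm]
  refine Finset.sum_congr rfl fun l _ => ?_
  have h := sum_counit_mul_apply
    (F.ofConv ∘ₗ (TensorProduct.mk k _ _).flip (e₂ l) ∘ₗ (TensorProduct.mk k _ _).flip (d₂ j)) hc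
  simp only [LinearMap.comp_apply, LinearMap.flip_apply, TensorProduct.mk_apply] at h
  rw [← h, Finset.mul_sum]
  simp only [leg₂₃_apply]
  exact Finset.sum_congr rfl fun i _ => by ring

lemma leg₁₃_mul_leg₂₃_apply (he : comul e = ∑ l, e₁ l ⊗ₜ[k] e₂ l) :
    (leg₁₃ k C (toConv (lift β)) * leg₂₃ k C (toConv (lift γ))) ((c ⊗ₜ d) ⊗ₜ e) =
      ∑ l, β c (e₁ l) * γ d (e₂ l) := by
  obtain ⟨n, c₁, c₂, hc⟩ := exists_eq_fin_sum_tmul (comul (R := k) c)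
  obtain ⟨m, d₁, d₂, hd⟩ := exists_eq_fin_sum_tmul (comul (R := k) d)
  have hβ l := sum_apply_mul_counit (β.flip (e₁ l)) hc
  have hγ l := sum_counit_mul_apply (γ.flip (e₂ l)) hd
  simp only [LinearMap.flip_apply] at hβ hγ
  calc _ = ∑ i, ∑ l, ∑ j,
          counit (d₁ j) * β (c₁ i) (e₁ l) * (counit (c₂ i) * γ (d₂ j) (e₂ l)) := by
        simp only [convMul_tmul_tmul_apply _ _ hc hd he, leg₁₃_apply, leg₂₃_apply]
        exact Finset.sum_congr rfl fun i _ => Finset.sum_comm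
    _ = ∑ l, ∑ i, ∑ j,
          β (c₁ i) (e₁ l) * counit (c₂ i) * (counit (d₁ j) * γ (d₂ j) (e₂ l)) := by
        rw [Finset.sum_comm]
        exact Finset.sum_congr rfl fun l _ => Finset.sum_congr rfl fun i _ =>
          Finset.sum_congr rfl fun j _ => by ring
    _ = _ := by simp only [← hβ, ← hγ, Finset.sum_mul_sum]

lemma leg₁₃_mul_leg₁₂_apply (hc : comul c = ∑ i, c₁ i ⊗ₜ[k] c₂ i) :
    (leg₁₃ k C (toConv (lift β)) * leg₁₂ k C (toConv (lift γ))) ((c ⊗ₜ d) ⊗ₜ e) =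
      ∑ i, β (c₁ i) e * γ (c₂ i) d := by
  obtain ⟨m, d₁, d₂, hd⟩ := exists_eq_fin_sum_tmul (comul (R := k) d)
  obtain ⟨p, e₁, e₂, he⟩ := exists_eq_fin_sum_tmul (comul (R := k) e)
  simp only [convMul_tmul_tmul_apply _ _ hc hd he, leg₁₃_apply, leg₁₂_apply,
    ← sum_apply_mul_counit (β (c₁ _)) he, ← sum_counit_mul_apply (γ (c₂ _)) hd,
    Finset.sum_mul_sum]
  refine Finset.sum_congr rfl fun i _ => ?_
  rw [Finset.sum_comm]
  exact Finset.sum_congr rfl fun l _ => Finset.sum_congr rfl fun j _ => by ring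

lemma yangBaxter_lhs_apply (hc : comul c = ∑ i, c₁ i ⊗ₜ[k] c₂ i)
    (hd : comul d = ∑ j, d₁ j ⊗ₜ[k] d₂ j) (he : comul e = ∑ l, e₁ l ⊗ₜ[k] e₂ l) :
    (leg₁₂ k C (toConv (lift β)) * leg₁₃ k C (toConv (lift β)) * leg₂₃ k C (toConv (lift β)))
      ((c ⊗ₜ d) ⊗ₜ e) =
      ∑ i, ∑ j, ∑ l, β (c₁ i) (d₁ j) * β (c₂ i) (e₁ l) * β (d₂ j) (e₂ l) := by
  rw [mul_assoc, leg₁₂_mul_apply _ _ hc hd]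
  simp only [leg₁₃_mul_leg₂₃_apply _ _ he, Finset.mul_sum, mul_assoc]

lemma yangBaxter_rhs_apply (hc : comul c = ∑ i, c₁ i ⊗ₜ[k] c₂ i)
    (hd : comul d = ∑ j, d₁ j ⊗ₜ[k] d₂ j) (he : comul e = ∑ l, e₁ l ⊗ₜ[k] e₂ l) :
    (leg₂₃ k C (toConv (lift β)) * leg₁₃ k C (toConv (lift β)) * leg₁₂ k C (toConv (lift β)))
      ((c ⊗ₜ d) ⊗ₜ e) =
      ∑ i, ∑ j, ∑ l, β (c₂ i) (d₂ j) * β (c₁ i) (e₂ l) * β (d₁ j) (e₁ l) := by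
  rw [mul_assoc, leg₂₃_mul_apply _ _ hd he]
  simp only [leg₁₃_mul_leg₁₂_apply _ _ hc, Finset.mul_sum]
  symm
  rw [Finset.sum_comm]
  refine Finset.sum_congr rfl fun j _ => ?_
  rw [Finset.sum_comm]
  exact Finset.sum_congr rfl fun l _ => Finset.sum_congr rfl fun i _ => by ring

theorem qc3_iff_yangBaxter_legs :
    QC3 comul β ↔
      leg₁₂ k C (toConv (lift β)) * leg₁₃ k C (toConv (lift β)) * leg₂₃ k C (toConv (lift β)) =
        leg₂₃ k C (toConv (lift β)) * leg₁₃ k C (toConv (lift β)) *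
          leg₁₂ k C (toConv (lift β)) := by
  constructor
  · intro h
    ext c d e
    obtain ⟨n, c₁, c₂, hc⟩ := exists_eq_fin_sum_tmul (comul (R := k) c)
    obtain ⟨m, d₁, d₂, hd⟩ := exists_eq_fin_sum_tmul (comul (R := k) d)
    obtain ⟨p, e₁, e₂, he⟩ := exists_eq_fin_sum_tmul (comul (R := k) e)
    simp only [AlgebraTensorModule.curry_apply, curry_apply, LinearMap.restrictScalars_self]
    rw [yangBaxter_lhs_apply β hc hd he, yangBaxter_rhs_apply β hc hd he]
    exact h c d e n m p c₁ c₂ d₁ d₂ e₁ e₂ hc hd he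
  · intro h c d e n m p c₁ c₂ d₁ d₂ e₁ e₂ hc hd he
    rw [← yangBaxter_lhs_apply β hc hd he, ← yangBaxter_rhs_apply β hc hd he, h]

end YangBaxter

lemma QC3.of_isInverseForm {k C : Type*} [Field k] [AddCommGroup C] [Module k C]
    [Coalgebra k C]
    {b b' : C →ₗ[k] C →ₗ[k] k} (h : IsInverseForm comul counit comul counit b b')
    (hb : QC3 comul b) : QC3 comul b' := by
  let u : (WithConv (C ⊗[k] C →ₗ[k] k))ˣ :=
    ⟨toConv (lift b), toConv (lift b'), h.convMul_eq_one.2, h.convMul_eq_one.1⟩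
  have hu : Units.map (leg₁₂ k C) u * Units.map (leg₁₃ k C) u * Units.map (leg₂₃ k C) u =
      Units.map (leg₂₃ k C) u * Units.map (leg₁₃ k C) u * Units.map (leg₁₂ k C) u :=
    Units.ext ((qc3_iff_yangBaxter_legs b).1 hb)
  have hu_inv : (Units.map (leg₁₂ k C) u)⁻¹ * (Units.map (leg₁₃ k C) u)⁻¹ *
      (Units.map (leg₂₃ k C) u)⁻¹ = (Units.map (leg₂₃ k C) u)⁻¹ *
      (Units.map (leg₁₃ k C) u)⁻¹ * (Units.map (leg₁₂ k C) u)⁻¹ := by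
    simpa [mul_assoc] using congrArg (·⁻¹) hu.symm
  rw [qc3_iff_yangBaxter_legs]
  simpa [← map_inv, u] using congrArg Units.val hu_inv

/-- If `(C, b, T_d, T_u)` is an oriented quantum coalgebra then so is
`(C, b⁻¹, T_d⁻¹, T_u⁻¹)`. -/
theorem oqc_inverse {k C : Type*} [Field k] [AddCommGroup C] [Module k C] [Coalgebra k C]
    (b binv : C →ₗ[k] C →ₗ[k] k) (Td Tu Td' Tu' : C →ₗ[k] C)
    (h : IsOrientedQuantumCoalgebra (Coalgebra.comul (R := k)) (Coalgebra.counit (R := k))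
      b binv Td Tu)
    (hTd1 : Td ∘ₗ Td' = LinearMap.id) (hTd2 : Td' ∘ₗ Td = LinearMap.id)
    (hTu1 : Tu ∘ₗ Tu' = LinearMap.id) (hTu2 : Tu' ∘ₗ Tu = LinearMap.id) :
    IsOrientedQuantumCoalgebra (Coalgebra.comul (R := k)) (Coalgebra.counit (R := k))
      binv b Td' Tu' := by
  obtain ⟨hinv, hTd, hTu, hcomm, hqc1, hqc2, hqc3⟩ := h
  obtain ⟨hbd, hbu⟩ := qc2_iff.1 hqc2
  have hb'd := hTd.isInvariantForm_of_isInverseForm hinv hbd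
  have hb'u := hTu.isInvariantForm_of_isInverseForm hinv hbu
  have hTd' : Function.LeftInverse Td Td' := LinearMap.congr_fun hTd1
  have hTu' : Function.LeftInverse Tu Tu' := LinearMap.congr_fun hTu1
  have h𝒮 {T : C →ₗ[k] C} (hb : IsInvariantForm b T) (hb' : IsInvariantForm binv T) :
      ∀ β ∈ ({binv, b} : Set _), IsInvariantForm β T := by
    simp only [Set.mem_insert_iff, Set.mem_singleton_iff, forall_eq_or_imp, forall_eq]
    exact ⟨hb', hb⟩
  let uTd : (Module.End k C)ˣ := ⟨Td, Td', hTd1, hTd2⟩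
  let uTu : (Module.End k C)ˣ := ⟨Tu, Tu', hTu1, hTu2⟩
  refine ⟨hinv.symm, ?_, ?_, ?_, hqc1.of_leftInverse hTd hTu hbd hbu hb'd hb'u hTd' hTu',
    qc2_iff.2 ⟨hb'd.of_leftInverse hTd', hb'u.of_leftInverse hTu'⟩, hqc3.of_isInverseForm hinv⟩
  · rw [Set.pair_comm] at hTd
    exact hTd.of_leftInverse (h𝒮 hbd hb'd) hTd' (LinearMap.congr_fun hTd2)
  · rw [Set.pair_comm] at hTu
    exact hTu.of_leftInverse (h𝒮 hbu hb'u) hTu' (LinearMap.congr_fun hTu2)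
  · exact congrArg Units.val (Commute.inv_inv (a := uTd) (b := uTu) (Units.ext hcomm))
end

section
/- Let (C, b, T_d, T_u) be an oriented quantum coalgebra over a field k such that the bilinear form b is left non-singular (i.e., c ↦ b(c, −) is injective as a map C → C*) or right non-singular (i.e., c ↦ b(−, c) is injective). Then T_d and T_u are coalgebra automorphisms of C (in the ordinary sense: they commute with the coproduct and counit). -/
open TensorProduct

/-! Testing the defining identity of a coalgebra automorphism `T` with respect to `b` (with
`β = β' = b`) against all `d, e` says that `Δ (T c)` and `(T ⊗ T) (Δ c)` have the same image
under the pairing `C ⊗ C → Bil(C)`, `x ⊗ y ↦ ((d, e) ↦ b(x, d) b(y, e))`. For left non-singular `b`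
this pairing is injective: it factors as `b ⊗ b : C ⊗ C → C* ⊗ C*`, injective because tensoring
over a field preserves injections, followed by the canonical map `C* ⊗ C* → Hom(C, C*)`, which is
injective because `C*` is free. For right non-singular `b` the same argument applies to `b.flip`. -/

theorem dualTensorHom_injective {R M N : Type*} [CommRing R] [AddCommGroup M] [Module R M]
    [AddCommGroup N] [Module R N] [Module.Free R N] :
    Function.Injective (dualTensorHom R M N) := by
  classical
  let e := (Module.Free.chooseBasis R N).repr
  have hcomp := dualTensorHom_comp_lTensor (M := M) e.toLinearMap
  rw [dualTensorHom_finsupp, dualTensorHom_self_right] at hcomp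
  have hinj : Function.Injective (e.toLinearMap.compRight R ∘ₗ dualTensorHom R M N) := by
    rw [← hcomp]
    exact (LinearMap.finsuppLinearMap_injective ..).comp <|
      (Finsupp.mapRange_injective _ (map_zero _) (LinearEquiv.injective _)).comp <|
      (LinearEquiv.injective _).comp (LinearEquiv.injective (e.lTensor _))
  exact .of_comp (f := e.toLinearMap.compRight R) hinj

section Pairing

variable {k M N : Type*} [Field k] [AddCommGroup M] [Module k M] [AddCommGroup N] [Module k N]

def tensorPairing (β : M →ₗ[k] N →ₗ[k] k) : M ⊗[k] M →ₗ[k] N →ₗ[k] N →ₗ[k] k :=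
  dualTensorHom k N (Module.Dual k N) ∘ₗ TensorProduct.map β β

@[simp]
theorem tensorPairing_tmul (β : M →ₗ[k] N →ₗ[k] k) (x y : M) (d e : N) :
    tensorPairing β (x ⊗ₜ y) d e = β x d * β y e := by
  simp [tensorPairing, dualTensorHom_apply]

theorem tensorPairing_injective {β : M →ₗ[k] N →ₗ[k] k} (hβ : Function.Injective β) :
    Function.Injective (tensorPairing β) :=
  dualTensorHom_injective.comp (map_injective_of_flat_flat β β hβ hβ)

end Pairing

theorem IsCoalgAutoWrt.isCoalgAuto {k C : Type*} [Field k] [AddCommGroup C] [Module k C]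
    {Δ : C →ₗ[k] C ⊗[k] C} {ε : C →ₗ[k] k} {𝒮 : Set (C →ₗ[k] C →ₗ[k] k)} {T : C →ₗ[k] C}
    {β : C →ₗ[k] C →ₗ[k] k} (hT : IsCoalgAutoWrt Δ ε 𝒮 T) (hβ𝒮 : β ∈ 𝒮)
    (hβ : Function.Injective β ∨ Function.Injective β.flip) :
    IsCoalgAuto Δ ε T := by
  refine ⟨hT.1, hT.2.1, LinearMap.ext fun c => ?_⟩
  obtain ⟨n, c1, c2, hc⟩ := exists_sum_tmul_eq (Δ c)
  obtain ⟨m, f1, f2, hf⟩ := exists_sum_tmul_eq (Δ (T c))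
  have hwrt d e := hT.2.2 β hβ𝒮 β hβ𝒮 c d e n m c1 c2 f1 f2 hc hf
  have hmap : map T T (Δ c) = ∑ i, T (c1 i) ⊗ₜ T (c2 i) := by simp [hc]
  simp only [LinearMap.comp_apply, hmap, hf]
  rcases hβ with hinj | hinj
  · refine tensorPairing_injective hinj (LinearMap.ext₂ fun d e => ?_)
    simpa [map_sum] using (hwrt d e).1.symm
  · refine tensorPairing_injective hinj (LinearMap.ext₂ fun d e => ?_)
    simpa [map_sum] using (hwrt d e).2.symm

/-- If the form of an oriented quantum coalgebra is left or right non-singular, then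
`T_d` and `T_u` are ordinary coalgebra automorphisms. -/
theorem oqc_nonsingular_strict {k C : Type*} [Field k] [AddCommGroup C] [Module k C]
    [Coalgebra k C] (b binv : C →ₗ[k] C →ₗ[k] k) (Td Tu : C →ₗ[k] C)
    (h : IsOrientedQuantumCoalgebra (Coalgebra.comul (R := k)) (Coalgebra.counit (R := k))
      b binv Td Tu)
    (hns : Function.Injective ⇑b ∨ Function.Injective ⇑b.flip) :
    IsCoalgAuto (Coalgebra.comul (R := k)) (Coalgebra.counit (R := k)) Td ∧
    IsCoalgAuto (Coalgebra.comul (R := k)) (Coalgebra.counit (R := k)) Tu :=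
  ⟨h.2.1.isCoalgAuto (Set.mem_insert b _) hns, h.2.2.1.isCoalgAuto (Set.mem_insert b _) hns⟩
end

section
/- If (C, b, S) is a quantum coalgebra over a field k, then (C, b, 1_C, S^{-2}) is an oriented quantum coalgebra over k. In particular, if (C, b, S) is a strict quantum coalgebra then (C, b, 1_C, S^{-2}) is a strict oriented quantum coalgebra. -/
open TensorProduct

/-!
A map `T` is a coalgebra (anti)morphism with respect to `b` exactly when `Δ ∘ T` and
`(T ⊗ T) ∘ Δ` (resp. `τ ∘ (T ⊗ T) ∘ Δ`) agree modulo the subspace of `C ⊗ C` killed by all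
`b(·, d) ⊗ b(·, e)`, and likewise for `b(d, ·) ⊗ b(e, ·)`. These subspaces are stable under the
flip `τ` and, by (QC.2), under `S⁻¹ ⊗ S⁻¹`, so the strict-case argument goes through modulo them:
`S⁻¹` is again an antimorphism, hence `S⁻²` is a morphism. Axiom (qc.1) for `(1, S⁻²)` is (QC.1)
transported along the antimorphism property of `S`, (qc.2) follows from (QC.2), and (qc.3) is
(QC.3).
-/

open Module

section Pairing

variable {R M N M' N' : Type*} [CommRing R] [AddCommGroup M] [Module R M] [AddCommGroup N]
  [Module R N] [AddCommGroup M'] [Module R M'] [AddCommGroup N'] [Module R N']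

theorem TensorProduct.dualDistrib_apply_eq_sum {φ : Dual R M} {ψ : Dual R N} {n : ℕ}
    {a : Fin n → M} {b : Fin n → N} {x : M ⊗[R] N} (hx : x = ∑ i, a i ⊗ₜ[R] b i) :
    dualDistrib R M N (φ ⊗ₜ ψ) x = ∑ i, φ (a i) * ψ (b i) := by
  simp [hx]

theorem TensorProduct.dualDistrib_apply_map (φ : Dual R M) (ψ : Dual R N) (f : M' →ₗ[R] M)
    (g : N' →ₗ[R] N) (x : M' ⊗[R] N') :
    dualDistrib R M N (φ ⊗ₜ ψ) (map f g x) = dualDistrib R M' N' ((φ ∘ₗ f) ⊗ₜ (ψ ∘ₗ g)) x := by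
  induction x with
  | zero => simp
  | tmul => simp
  | add x y hx hy => simp only [map_add, hx, hy]

theorem TensorProduct.dualDistrib_tmul_apply_comm (φ : Dual R M) (ψ : Dual R N)
    (x : N ⊗[R] M) :
    dualDistrib R M N (φ ⊗ₜ ψ) (TensorProduct.comm R N M x) =
      dualDistrib R N M (ψ ⊗ₜ φ) x := by
  rw [dualDistrib_apply_comm, comm_tmul]

end Pairing

section ComulModulo

variable {R C : Type*} [CommRing R] [AddCommGroup C] [Module R C]

/-- Congruence modulo `pairingKer (Set.range b.flip)` (resp. `pairingKer (Set.range b)`) is the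
paper's equality of tensors "with respect to `b`": equality after pairing with all
`b(·, d) ⊗ b(·, e)` (resp. `b(d, ·) ⊗ b(e, ·)`). -/
def pairingKer (F : Set (Dual R C)) : Submodule R (C ⊗[R] C) :=
  ⨅ φ ∈ F, ⨅ ψ ∈ F, LinearMap.ker (dualDistrib R C C (φ ⊗ₜ ψ))

theorem smodEq_pairingKer_iff {F : Set (Dual R C)} {x y : C ⊗[R] C} :
    x ≡ y [SMOD pairingKer F] ↔
      ∀ φ ∈ F, ∀ ψ ∈ F, dualDistrib R C C (φ ⊗ₜ ψ) x = dualDistrib R C C (φ ⊗ₜ ψ) y := by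
  simp [SModEq.sub_mem, pairingKer, sub_eq_zero]

theorem map_comm_pairingKer_le (F : Set (Dual R C)) :
    (pairingKer F).map (TensorProduct.comm R C C).toLinearMap ≤ pairingKer F := by
  refine Submodule.map_le_iff_le_comap.2 fun x hx => ?_
  simp only [pairingKer, Submodule.mem_comap, Submodule.mem_iInf, LinearMap.mem_ker] at hx ⊢
  intro φ hφ ψ hψ
  rw [LinearEquiv.coe_coe, dualDistrib_tmul_apply_comm]
  exact hx ψ hψ φ hφ

theorem map_map_pairingKer_le {F : Set (Dual R C)} {f : C →ₗ[R] C}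
    (hf : ∀ φ ∈ F, φ ∘ₗ f ∈ F) : (pairingKer F).map (map f f) ≤ pairingKer F := by
  refine Submodule.map_le_iff_le_comap.2 fun x hx => ?_
  simp only [pairingKer, Submodule.mem_comap, Submodule.mem_iInf, LinearMap.mem_ker] at hx ⊢
  intro φ hφ ψ hψ
  rw [dualDistrib_apply_map]
  exact hx _ (hf φ hφ) _ (hf ψ hψ)

variable (Δ : C →ₗ[R] C ⊗[R] C) (K : Submodule R (C ⊗[R] C)) (T : C →ₗ[R] C)

def PreservesComulMod : Prop :=
  ∀ c, Δ (T c) ≡ map T T (Δ c) [SMOD K]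

def ReversesComulMod : Prop :=
  ∀ c, Δ (T c) ≡ TensorProduct.comm R C C (map T T (Δ c)) [SMOD K]

variable {Δ K T}

theorem preservesComulMod_bot_iff : PreservesComulMod Δ ⊥ T ↔ Δ ∘ₗ T = map T T ∘ₗ Δ := by
  simp only [PreservesComulMod, SModEq.bot, LinearMap.ext_iff, LinearMap.comp_apply]

theorem reversesComulMod_bot_iff :
    ReversesComulMod Δ ⊥ T ↔ ∀ c, TensorProduct.comm R C C (Δ (T c)) = map T T (Δ c) := by
  refine forall_congr' fun c => SModEq.bot.trans ?_
  rw [← (TensorProduct.comm R C C).injective.eq_iff, comm_comm]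

theorem ReversesComulMod.of_inverse {T' : C →ₗ[R] C} (hT : ReversesComulMod Δ K T)
    (h₁ : T ∘ₗ T' = .id) (h₂ : T' ∘ₗ T = .id)
    (hcomm : K.map (TensorProduct.comm R C C).toLinearMap ≤ K) (hK : K.map (map T' T') ≤ K) :
    ReversesComulMod Δ K T' := by
  intro c
  have hc := hT (T' c)
  rw [show T (T' c) = c from LinearMap.congr_fun h₁ c] at hc
  have := ((hc.map (map T' T')).mono hK).map (TensorProduct.comm R C C).toLinearMap
    |>.mono hcomm
  rwa [LinearEquiv.coe_coe, map_comm, comm_comm, map_map, h₂, map_id,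
    LinearMap.id_apply, SModEq.comm] at this

theorem ReversesComulMod.preservesComulMod_comp_self (hT : ReversesComulMod Δ K T)
    (hcomm : K.map (TensorProduct.comm R C C).toLinearMap ≤ K) (hK : K.map (map T T) ≤ K) :
    PreservesComulMod Δ K (T ∘ₗ T) := by
  intro c
  have := (((hT c).map (map T T)).mono hK).map (TensorProduct.comm R C C).toLinearMap
    |>.mono hcomm
  rw [LinearEquiv.coe_coe, map_comm, comm_comm, map_map] at this
  exact (hT (T c)).trans this

theorem bijective_comp_self_of_inverse {T T' : C →ₗ[R] C} (h₁ : T ∘ₗ T' = .id)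
    (h₂ : T' ∘ₗ T = .id) : Function.Bijective (T' ∘ₗ T') :=
  have hT' : Function.Bijective T' :=
    Function.bijective_iff_has_inverse.2 ⟨T, LinearMap.congr_fun h₁, LinearMap.congr_fun h₂⟩
  hT'.comp hT'

theorem ReversesComulMod.preservesComulMod_inv_sq_pairingKer {F : Set (Dual R C)}
    {T' : C →ₗ[R] C} (hT : ReversesComulMod Δ (pairingKer F) T) (h₁ : T ∘ₗ T' = .id)
    (h₂ : T' ∘ₗ T = .id) (hF : ∀ φ ∈ F, φ ∘ₗ T' ∈ F) :
    PreservesComulMod Δ (pairingKer F) (T' ∘ₗ T') :=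
  (hT.of_inverse h₁ h₂ (map_comm_pairingKer_le F) (map_map_pairingKer_le hF)
    ).preservesComulMod_comp_self (map_comm_pairingKer_le F) (map_map_pairingKer_le hF)

end ComulModulo

section OrientedFromQuantum

variable {k C : Type*} [Field k] [AddCommGroup C] [Module k C] {Δ : C →ₗ[k] C ⊗[k] C}
  {ε : C →ₗ[k] k}

theorem isCoalgAutoWrt_of_preservesComulMod {𝒮 : Set (C →ₗ[k] C →ₗ[k] k)} {T : C →ₗ[k] C}
    {FL FR : Set (Dual k C)} (hT : Function.Bijective T) (hε : ∀ c, ε (T c) = ε c)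
    (hFL : ∀ β ∈ 𝒮, ∀ d, β.flip d ∈ FL) (hFR : ∀ β ∈ 𝒮, ∀ d, β d ∈ FR)
    (hL : PreservesComulMod Δ (pairingKer FL) T) (hR : PreservesComulMod Δ (pairingKer FR) T) :
    IsCoalgAutoWrt Δ ε 𝒮 T := by
  refine ⟨hT, hε, fun β hβ β' hβ' c d e n m c1 c2 f1 f2 hc hf => ⟨?_, ?_⟩⟩
  · have := smodEq_pairingKer_iff.1 (hL c) _ (hFL β hβ d) _ (hFL β' hβ' e)
    rw [dualDistrib_apply_map, dualDistrib_apply_eq_sum hc, dualDistrib_apply_eq_sum hf]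
      at this
    exact this.symm
  · have := smodEq_pairingKer_iff.1 (hR c) _ (hFR β hβ d) _ (hFR β' hβ' e)
    rw [dualDistrib_apply_map, dualDistrib_apply_eq_sum hc, dualDistrib_apply_eq_sum hf]
      at this
    exact this.symm

theorem isCoalgAutoWrt_id (𝒮 : Set (C →ₗ[k] C →ₗ[k] k)) : IsCoalgAutoWrt Δ ε 𝒮 .id :=
  isCoalgAutoWrt_of_preservesComulMod (FL := .univ) (FR := .univ) Function.bijective_id
    (fun _ => rfl) (fun _ _ _ => trivial) (fun _ _ _ => trivial)
    (fun c => by simp [map_id]) (fun c => by simp [map_id])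

theorem isCoalgAuto_id : IsCoalgAuto Δ ε .id :=
  ⟨Function.bijective_id, fun _ => rfl, by rw [map_id, LinearMap.id_comp, LinearMap.comp_id]⟩

namespace IsQuantumCoalgebra

variable {b : C →ₗ[k] C →ₗ[k] k} {S Sinv : C →ₗ[k] C}

theorem isInverseForm (h : IsQuantumCoalgebra Δ ε b S) : IsInverseForm Δ ε Δ ε b (b ∘ₗ S) :=
  h.2.2.2.1

theorem qc3 (h : IsQuantumCoalgebra Δ ε b S) : QC3 Δ b := h.2.2.2.2.2

theorem counit_apply (h : IsQuantumCoalgebra Δ ε b S) (c : C) : ε (S c) = ε c := h.2.1 c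

theorem apply_apply (h : IsQuantumCoalgebra Δ ε b S) (c d : C) : b (S c) (S d) = b c d :=
  h.2.2.2.2.1 c d

theorem counit_inv_apply (h : IsQuantumCoalgebra Δ ε b S) (hS : S ∘ₗ Sinv = .id) (c : C) :
    ε (Sinv c) = ε c := by
  rw [← h.counit_apply, ← LinearMap.comp_apply S Sinv, hS, LinearMap.id_apply]

theorem inv_apply_left (h : IsQuantumCoalgebra Δ ε b S) (hS : S ∘ₗ Sinv = .id) (c d : C) :
    b (Sinv c) d = b c (S d) := by
  rw [← h.apply_apply, ← LinearMap.comp_apply S Sinv, hS, LinearMap.id_apply]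

theorem apply_inv_right (h : IsQuantumCoalgebra Δ ε b S) (hS : S ∘ₗ Sinv = .id) (c d : C) :
    b c (Sinv d) = b (S c) d := by
  rw [← h.apply_apply, ← LinearMap.comp_apply S Sinv, hS, LinearMap.id_apply]

theorem reversesComulMod_flip (h : IsQuantumCoalgebra Δ ε b S) :
    ReversesComulMod Δ (pairingKer (Set.range b.flip)) S := by
  refine fun c => smodEq_pairingKer_iff.2 ?_
  rintro _ ⟨d, rfl⟩ _ ⟨e, rfl⟩
  obtain ⟨n, c1, c2, hc⟩ := exists_sum_tmul_eq (Δ c)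
  obtain ⟨m, f1, f2, hf⟩ := exists_sum_tmul_eq (Δ (S c))
  rw [dualDistrib_tmul_apply_comm, dualDistrib_apply_map, dualDistrib_apply_eq_sum hc,
    dualDistrib_apply_eq_sum hf]
  simpa [mul_comm] using (h.2.2.1 c e d n m c1 c2 f1 f2 hc hf).1.symm

theorem reversesComulMod (h : IsQuantumCoalgebra Δ ε b S) :
    ReversesComulMod Δ (pairingKer (Set.range b)) S := by
  refine fun c => smodEq_pairingKer_iff.2 ?_
  rintro _ ⟨d, rfl⟩ _ ⟨e, rfl⟩
  obtain ⟨n, c1, c2, hc⟩ := exists_sum_tmul_eq (Δ c)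
  obtain ⟨m, f1, f2, hf⟩ := exists_sum_tmul_eq (Δ (S c))
  rw [dualDistrib_tmul_apply_comm, dualDistrib_apply_map, dualDistrib_apply_eq_sum hc,
    dualDistrib_apply_eq_sum hf]
  simpa [mul_comm] using (h.2.2.1 c e d n m c1 c2 f1 f2 hc hf).2.symm

theorem isCoalgAutoWrt_inv_sq (h : IsQuantumCoalgebra Δ ε b S) (hS₁ : S ∘ₗ Sinv = .id)
    (hS₂ : Sinv ∘ₗ S = .id) : IsCoalgAutoWrt Δ ε {b, b ∘ₗ S} (Sinv ∘ₗ Sinv) := by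
  refine isCoalgAutoWrt_of_preservesComulMod (bijective_comp_self_of_inverse hS₁ hS₂)
    (fun c => by simp only [LinearMap.comp_apply, h.counit_inv_apply hS₁])
    ?_ ?_ (h.reversesComulMod_flip.preservesComulMod_inv_sq_pairingKer hS₁ hS₂ ?_)
    (h.reversesComulMod.preservesComulMod_inv_sq_pairingKer hS₁ hS₂ ?_)
  · rintro β (rfl | rfl) d
    · exact ⟨d, rfl⟩
    · exact ⟨Sinv d, LinearMap.ext fun c => h.apply_inv_right hS₁ c d⟩
  · rintro β (rfl | rfl) d
    · exact ⟨d, rfl⟩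
    · exact ⟨S d, rfl⟩
  · rintro _ ⟨d, rfl⟩
    exact ⟨S d, LinearMap.ext fun c => (h.inv_apply_left hS₁ c d).symm⟩
  · rintro _ ⟨d, rfl⟩
    exact ⟨S d, LinearMap.ext fun c => (h.apply_inv_right hS₁ d c).symm⟩

theorem isCoalgAuto_inv_sq (h : IsQuantumCoalgebra Δ ε b S) (hS₁ : S ∘ₗ Sinv = .id)
    (hS₂ : Sinv ∘ₗ S = .id)
    (hstrict : ∀ c, TensorProduct.comm k C C (Δ (S c)) = map S S (Δ c)) :
    IsCoalgAuto Δ ε (Sinv ∘ₗ Sinv) := by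
  have hbot {f : C ⊗[k] C →ₗ[k] C ⊗[k] C} : (⊥ : Submodule k (C ⊗[k] C)).map f ≤ ⊥ :=
    (Submodule.map_bot f).le
  refine ⟨bijective_comp_self_of_inverse hS₁ hS₂,
    fun c => by simp only [LinearMap.comp_apply, h.counit_inv_apply hS₁], ?_⟩
  exact preservesComulMod_bot_iff.1 <| ((reversesComulMod_bot_iff.2 hstrict).of_inverse
    hS₁ hS₂ hbot hbot).preservesComulMod_comp_self hbot hbot

theorem qc1 (h : IsQuantumCoalgebra Δ ε b S) (hS : S ∘ₗ Sinv = .id) :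
    QC1 Δ ε b (b ∘ₗ S) .id (Sinv ∘ₗ Sinv) := by
  intro c d n m c1 c2 d1 d2 hc hd
  obtain ⟨p, g1, g2, hg⟩ := exists_sum_tmul_eq (Δ (S c))
  have hanti {φ ψ : Dual k C} (hφ : φ ∈ Set.range b.flip) (hψ : ψ ∈ Set.range b.flip) :
      ∑ l, φ (g1 l) * ψ (g2 l) = ∑ i, ψ (S (c1 i)) * φ (S (c2 i)) := by
    have := smodEq_pairingKer_iff.1 (h.reversesComulMod_flip c) φ hφ ψ hψ
    rwa [dualDistrib_tmul_apply_comm, dualDistrib_apply_map, dualDistrib_apply_eq_sum hc,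
      dualDistrib_apply_eq_sum hg] at this
  have hinv := h.isInverseForm (S c) d p m g1 g2 d1 d2 hg hd
  simp only [LinearMap.comp_apply, LinearMap.id_apply]
  constructor
  · calc ∑ i, ∑ j, b (c1 i) (Sinv (Sinv (d2 j))) * b (S (c2 i)) (d1 j)
        = ∑ j, ∑ l, b (g1 l) (d1 j) * b (S (g2 l)) (d2 j) := by
          rw [Finset.sum_comm]
          refine Finset.sum_congr rfl fun j _ => ?_
          simpa [h.apply_inv_right hS] using (hanti ⟨d1 j, rfl⟩ ⟨Sinv (d2 j), rfl⟩).symm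
      _ = ε (S c) * ε d := by rw [Finset.sum_comm]; exact hinv.2
      _ = ε c * ε d := by rw [h.counit_apply]
  · calc ∑ i, ∑ j, b (S (c1 i)) (d2 j) * b (c2 i) (Sinv (Sinv (d1 j)))
        = ∑ j, ∑ l, b (S (g1 l)) (d1 j) * b (g2 l) (d2 j) := by
          rw [Finset.sum_comm]
          refine Finset.sum_congr rfl fun j _ => ?_
          simpa [h.apply_inv_right hS] using (hanti ⟨Sinv (d1 j), rfl⟩ ⟨d2 j, rfl⟩).symm
      _ = ε (S c) * ε d := by rw [Finset.sum_comm]; exact hinv.1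
      _ = ε c * ε d := by rw [h.counit_apply]

theorem qc2 (h : IsQuantumCoalgebra Δ ε b S) (hS : S ∘ₗ Sinv = .id) :
    QC2 b .id (Sinv ∘ₗ Sinv) := fun c d => by
  have hS' (x : C) : S (Sinv x) = x := LinearMap.congr_fun hS x
  exact ⟨rfl, by simp only [LinearMap.comp_apply, h.inv_apply_left hS, hS']⟩

end IsQuantumCoalgebra

end OrientedFromQuantum

/-- If `(C, b, S)` is a quantum coalgebra then `(C, b, 1_C, S⁻²)` is an oriented quantum
coalgebra; if moreover `(C, b, S)` is strict then `(C, b, 1_C, S⁻²)` is a strict oriented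
quantum coalgebra. Here `Sinv` denotes the inverse of `S`, the inverse of `b` being
`b(S(·), ·)` by (QC.1). -/
theorem quantum_coalgebra_gives_oriented {k C : Type*} [Field k] [AddCommGroup C]
    [Module k C] [Coalgebra k C] (b : C →ₗ[k] C →ₗ[k] k) (S Sinv : C →ₗ[k] C)
    (h : IsQuantumCoalgebra (Coalgebra.comul (R := k)) (Coalgebra.counit (R := k)) b S)
    (hS1 : S ∘ₗ Sinv = LinearMap.id) (hS2 : Sinv ∘ₗ S = LinearMap.id) :
    IsOrientedQuantumCoalgebra (Coalgebra.comul (R := k)) (Coalgebra.counit (R := k))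
      b (b ∘ₗ S) LinearMap.id (Sinv ∘ₗ Sinv) ∧
    ((∀ c : C, (TensorProduct.comm k C C) (Coalgebra.comul (R := k) (S c))
        = TensorProduct.map S S (Coalgebra.comul (R := k) c)) →
      IsStrictOrientedQuantumCoalgebra (Coalgebra.comul (R := k)) (Coalgebra.counit (R := k))
        b (b ∘ₗ S) LinearMap.id (Sinv ∘ₗ Sinv)) := by
  have hcomm : LinearMap.id ∘ₗ (Sinv ∘ₗ Sinv) = (Sinv ∘ₗ Sinv) ∘ₗ LinearMap.id := rfl
  exact ⟨⟨h.isInverseForm, isCoalgAutoWrt_id _, h.isCoalgAutoWrt_inv_sq hS1 hS2, hcomm,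
      h.qc1 hS1, h.qc2 hS1, h.qc3⟩,
    fun hstrict => ⟨h.isInverseForm, isCoalgAuto_id, h.isCoalgAuto_inv_sq hS1 hS2 hstrict,
      hcomm, h.qc1 hS1, h.qc2 hS1, h.qc3⟩⟩
end
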